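/- arXiv:1102.4966 — 6 statements merged into one kernel-verified Lean document; each statement's English description precedes it below -/
import Mathlib

section
/- Let 1 ≤ i ≤ n−2 and 2 ≤ j with i+j ≤ n−1. Then B_{i,j} is the disjoint union of the four sets S_{i,j}, S_{i,j+1}, S_{i+1,j} and S_{i+1,j+1}: these four sets are pairwise disjoint and their union equals B_{i,j}. -/
/-- The set `S_{i,j} ⊆ ℤ^{n−2}` (coordinates `γ_1,…,γ_{n−2}`, modelled as functions `ℕ → ℤ`
constrained on indices `1,…,n−2`):
`Λ_p−n/2+p ≥ γ_p ≥ Λ_{p+1}−n/2+p+1` for `1 ≤ p ≤ i−1`;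
`Λ_{p+1}−n/2+p ≥ γ_p ≥ Λ_{p+2}−n/2+p+1` for `i ≤ p ≤ n−j`;
`Λ_{p+2}−n/2+p ≥ γ_p ≥ Λ_{p+3}−n/2+p+1` for `n−j+1 ≤ p ≤ n−2`. -/
def Sset (n : ℕ) (Λ : ℕ → ℝ) (i j : ℕ) : Set (ℕ → ℤ) :=
  {γ | (∀ p : ℕ, 1 ≤ p → p < i →
          (γ p : ℝ) ≤ Λ p - n/2 + p ∧ Λ (p+1) - n/2 + p + 1 ≤ γ p)
     ∧ (∀ p : ℕ, i ≤ p → (p : ℤ) ≤ (n : ℤ) - j →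
          (γ p : ℝ) ≤ Λ (p+1) - n/2 + p ∧ Λ (p+2) - n/2 + p + 1 ≤ γ p)
     ∧ (∀ p : ℕ, (n : ℤ) - j + 1 ≤ (p : ℤ) → (p : ℤ) ≤ (n : ℤ) - 2 →
          (γ p : ℝ) ≤ Λ (p+2) - n/2 + p ∧ Λ (p+3) - n/2 + p + 1 ≤ γ p)}

/-- The set `B_{k,l} ⊆ ℤ^{n−2}` of branching weights:
`Λ_p−n/2+p ≥ γ_p ≥ Λ_{p+1}−n/2+p+1` for `1 ≤ p ≤ k−1`;
`Λ_k−n/2+k ≥ γ_k ≥ Λ_{k+2}−n/2+k+1` (omitted when `k = 0`);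
`Λ_{p+1}−n/2+p ≥ γ_p ≥ Λ_{p+2}−n/2+p+1` for `k+1 ≤ p ≤ n−l−1`;
`Λ_{n−l+1}−n/2+(n−l) ≥ γ_{n−l} ≥ Λ_{n−l+3}−n/2+(n−l)+1` (omitted when `l = 1`);
`Λ_{p+2}−n/2+p ≥ γ_p ≥ Λ_{p+3}−n/2+p+1` for `n−l+1 ≤ p ≤ n−2`. -/
def Bset (n : ℕ) (Λ : ℕ → ℝ) (k l : ℕ) : Set (ℕ → ℤ) :=
  {γ | (∀ p : ℕ, 1 ≤ p → p < k →
          (γ p : ℝ) ≤ Λ p - n/2 + p ∧ Λ (p+1) - n/2 + p + 1 ≤ γ p)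
     ∧ (1 ≤ k → (γ k : ℝ) ≤ Λ k - n/2 + k ∧ Λ (k+2) - n/2 + k + 1 ≤ γ k)
     ∧ (∀ p : ℕ, k + 1 ≤ p → (p : ℤ) ≤ (n : ℤ) - l - 1 →
          (γ p : ℝ) ≤ Λ (p+1) - n/2 + p ∧ Λ (p+2) - n/2 + p + 1 ≤ γ p)
     ∧ (2 ≤ l → (γ (n-l) : ℝ) ≤ Λ (n-l+1) - n/2 + (n-l : ℕ)
          ∧ Λ (n-l+3) - n/2 + (n-l : ℕ) + 1 ≤ γ (n-l))
     ∧ (∀ p : ℕ, (n : ℤ) - l + 1 ≤ (p : ℤ) → (p : ℤ) ≤ (n : ℤ) - 2 →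
          (γ p : ℝ) ≤ Λ (p+2) - n/2 + p ∧ Λ (p+3) - n/2 + p + 1 ≤ γ p)}

/-- The set `Box_{i,j} ⊆ ℤ^n` of Kraljević `K`-type parameters (coordinates `λ_1,…,λ_n`,
modelled as functions `ℕ → ℤ` constrained on indices `1,…,n`):
`Λ_{p−1}−n/2+p−1 ≥ λ_p ≥ Λ_p−n/2+p` for `1 ≤ p ≤ i`;
`Λ_p−n/2+p−1 ≥ λ_p ≥ Λ_{p+1}−n/2+p` for `i+1 ≤ p ≤ n−j+1`;
`Λ_{p+1}−n/2+p−1 ≥ λ_p ≥ Λ_{p+2}−n/2+p` for `n−j+2 ≤ p ≤ n`;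
with the conventions `Λ_0 = +∞`, `Λ_{n+2} = −∞` (the corresponding bound is omitted). -/
def Box (n : ℕ) (Λ : ℕ → ℝ) (i j : ℕ) : Set (ℕ → ℤ) :=
  {lam | (∀ p : ℕ, 1 ≤ p → p ≤ i →
            (2 ≤ p → (lam p : ℝ) ≤ Λ (p-1) - n/2 + p - 1) ∧ Λ p - n/2 + p ≤ lam p)
       ∧ (∀ p : ℕ, i + 1 ≤ p → (p : ℤ) ≤ (n : ℤ) - j + 1 →
            (lam p : ℝ) ≤ Λ p - n/2 + p - 1 ∧ Λ (p+1) - n/2 + p ≤ lam p)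
       ∧ (∀ p : ℕ, (n : ℤ) - j + 2 ≤ (p : ℤ) → p ≤ n →
            (lam p : ℝ) ≤ Λ (p+1) - n/2 + p - 1
              ∧ ((p : ℤ) ≤ (n : ℤ) - 1 → Λ (p+2) - n/2 + p ≤ lam p))}

/-- Let `n ≥ 2`, let `Λ_1 > ⋯ > Λ_{n+1}` be a regular integral
infinitesimal character, and let `1 ≤ i ≤ n−2`, `2 ≤ j`, `i+j ≤ n−1`.  Then `B_{i,j}`
is the disjoint union of `S_{i,j}`, `S_{i,j+1}`, `S_{i+1,j}` and `S_{i+1,j+1}`. -/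
theorem Bset_eq_disjoint_union_Sset (n : ℕ) (hn : 2 ≤ n) (Λ : ℕ → ℝ)
    (hdec : ∀ p : ℕ, 1 ≤ p → p ≤ n → Λ (p+1) < Λ p)
    (hint : ∀ p : ℕ, 1 ≤ p → p ≤ n+1 → ∃ m : ℤ, Λ p = m + n/2)
    (i j : ℕ) (hi1 : 1 ≤ i) (hi2 : i ≤ n-2) (hj1 : 2 ≤ j) (hij : i + j ≤ n-1) :
    (Sset n Λ i j ∩ Sset n Λ i (j+1) = ∅) ∧
    (Sset n Λ i j ∩ Sset n Λ (i+1) j = ∅) ∧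
    (Sset n Λ i j ∩ Sset n Λ (i+1) (j+1) = ∅) ∧
    (Sset n Λ i (j+1) ∩ Sset n Λ (i+1) j = ∅) ∧
    (Sset n Λ i (j+1) ∩ Sset n Λ (i+1) (j+1) = ∅) ∧
    (Sset n Λ (i+1) j ∩ Sset n Λ (i+1) (j+1) = ∅) ∧
    (Sset n Λ i j ∪ Sset n Λ i (j+1) ∪ Sset n Λ (i+1) j ∪ Sset n Λ (i+1) (j+1)
      = Bset n Λ i j) := by
  have hjn : j ≤ n := by omega
  obtain ⟨m1, hm1⟩ := hint (i+1) (by omega) (by omega)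
  obtain ⟨m2, hm2⟩ := hint (n-j+2) (by omega) (by omega)
  have hd_i : Λ (i+1) < Λ i := hdec i hi1 (by omega)
  have hd_i2 : Λ (i+2) < Λ (i+1) := by
    have h := hdec (i+1) (by omega) (by omega)
    rwa [show i+1+1 = i+2 by omega] at h
  have hd_q1 : Λ (n-j+2) < Λ (n-j+1) := by
    have h := hdec (n-j+1) (by omega) (by omega)
    rwa [show n-j+1+1 = n-j+2 by omega] at h
  have hd_q2 : Λ (n-j+3) < Λ (n-j+2) := by
    have h := hdec (n-j+2) (by omega) (by omega)
    rwa [show n-j+2+1 = n-j+3 by omega] at h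
  refine ⟨?_, ?_, ?_, ?_, ?_, ?_, ?_⟩
  · ext γ
    simp only [Sset, Set.mem_inter_iff, Set.mem_setOf_eq, Set.mem_empty_iff_false,
      iff_false]
    rintro ⟨⟨_, hB1, _⟩, _, _, hC2⟩
    have h1 := hB1 (n-j) (by omega) (by omega)
    have h2 := hC2 (n-j) (by omega) (by omega)
    exact absurd rfl (by intro _; linarith [h1.2, h2.1] : ¬ (0:ℕ) = 0)
  · ext γ
    simp only [Sset, Set.mem_inter_iff, Set.mem_setOf_eq, Set.mem_empty_iff_false,
      iff_false]
    rintro ⟨⟨_, hB1, _⟩, hA2, _, _⟩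
    have h1 := hB1 i le_rfl (by omega)
    have h2 := hA2 i hi1 (by omega)
    exact absurd rfl (by intro _; linarith [h1.1, h2.2] : ¬ (0:ℕ) = 0)
  · ext γ
    simp only [Sset, Set.mem_inter_iff, Set.mem_setOf_eq, Set.mem_empty_iff_false,
      iff_false]
    rintro ⟨⟨_, hB1, _⟩, hA2, _, _⟩
    have h1 := hB1 i le_rfl (by omega)
    have h2 := hA2 i hi1 (by omega)
    exact absurd rfl (by intro _; linarith [h1.1, h2.2] : ¬ (0:ℕ) = 0)
  · ext γ
    simp only [Sset, Set.mem_inter_iff, Set.mem_setOf_eq, Set.mem_empty_iff_false,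
      iff_false]
    rintro ⟨⟨_, _, hC1⟩, _, hB2, _⟩
    have h1 := hC1 (n-j) (by omega) (by omega)
    have h2 := hB2 (n-j) (by omega) (by omega)
    exact absurd rfl (by intro _; linarith [h1.1, h2.2] : ¬ (0:ℕ) = 0)
  · ext γ
    simp only [Sset, Set.mem_inter_iff, Set.mem_setOf_eq, Set.mem_empty_iff_false,
      iff_false]
    rintro ⟨⟨_, hB1, _⟩, hA2, _, _⟩
    have h1 := hB1 i le_rfl (by omega)
    have h2 := hA2 i hi1 (by omega)
    exact absurd rfl (by intro _; linarith [h1.1, h2.2] : ¬ (0:ℕ) = 0)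
  · ext γ
    simp only [Sset, Set.mem_inter_iff, Set.mem_setOf_eq, Set.mem_empty_iff_false,
      iff_false]
    rintro ⟨⟨_, hB1, _⟩, _, _, hC2⟩
    have h1 := hB1 (n-j) (by omega) (by omega)
    have h2 := hC2 (n-j) (by omega) (by omega)
    exact absurd rfl (by intro _; linarith [h1.2, h2.1] : ¬ (0:ℕ) = 0)
  · ext γ
    simp only [Sset, Bset, Set.mem_union, Set.mem_setOf_eq]
    constructor
    · rintro (((⟨hA, hB, hC⟩ | ⟨hA, hB, hC⟩) | ⟨hA, hB, hC⟩) | ⟨hA, hB, hC⟩)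
      · -- S i j ⊆ B
        refine ⟨hA, fun _ => ?_, fun p hp1 hp2 => hB p (by omega) (by omega),
          fun _ => ?_, hC⟩
        · have h := hB i le_rfl (by omega)
          exact ⟨by linarith [h.1], h.2⟩
        · have h := hB (n-j) (by omega) (by omega)
          exact ⟨h.1, by linarith [h.2]⟩
      · -- S i (j+1) ⊆ B
        refine ⟨hA, fun _ => ?_, fun p hp1 hp2 => hB p (by omega) (by omega),
          fun _ => ?_, fun p hp1 hp2 => hC p (by omega) hp2⟩
        · have h := hB i le_rfl (by omega)
          exact ⟨by linarith [h.1], h.2⟩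
        · have h := hC (n-j) (by omega) (by omega)
          exact ⟨by linarith [h.1], h.2⟩
      · -- S (i+1) j ⊆ B
        refine ⟨fun p h1 h2 => hA p h1 (by omega), fun _ => ?_,
          fun p hp1 hp2 => hB p (by omega) (by omega), fun _ => ?_, hC⟩
        · have h := hA i hi1 (by omega)
          exact ⟨h.1, by linarith [h.2]⟩
        · have h := hB (n-j) (by omega) (by omega)
          exact ⟨h.1, by linarith [h.2]⟩
      · -- S (i+1) (j+1) ⊆ B
        refine ⟨fun p h1 h2 => hA p h1 (by omega), fun _ => ?_,
          fun p hp1 hp2 => hB p (by omega) (by omega), fun _ => ?_,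
          fun p hp1 hp2 => hC p (by omega) hp2⟩
        · have h := hA i hi1 (by omega)
          exact ⟨h.1, by linarith [h.2]⟩
        · have h := hC (n-j) (by omega) (by omega)
          exact ⟨by linarith [h.1], h.2⟩
    · rintro ⟨hA, hK, hM, hL, hC⟩
      have hKi := hK hi1
      have hLj := hL hj1
      rcases le_or_gt (γ i) (m1 + (i : ℤ)) with h1 | h1
      · have hR1 : (γ i : ℝ) ≤ Λ (i+1) - n/2 + i := by
          have hc : ((γ i : ℤ) : ℝ) ≤ (m1 : ℝ) + (i : ℝ) := by exact_mod_cast h1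
          rw [hm1]; linarith
        rcases le_or_gt (γ (n-j)) (m2 + ((n-j : ℕ) : ℤ)) with h2 | h2
        · -- S i (j+1)
          have hR2 : (γ (n-j) : ℝ) ≤ Λ (n-j+2) - n/2 + ((n-j : ℕ) : ℝ) := by
            have hc : ((γ (n-j) : ℤ) : ℝ) ≤ (m2 : ℝ) + ((n-j : ℕ) : ℝ) := by
              exact_mod_cast h2
            rw [hm2]; linarith
          left; left; right
          refine ⟨hA, fun p hp1 hp2 => ?_, fun p hp1 hp2 => ?_⟩
          · by_cases hp : p = i
            · subst hp; exact ⟨hR1, hKi.2⟩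
            · exact hM p (by omega) (by omega)
          · by_cases hp : p = n - j
            · subst hp; exact ⟨hR2, hLj.2⟩
            · exact hC p (by omega) hp2
        · -- S i j
          have hR2 : Λ (n-j+2) - n/2 + ((n-j : ℕ) : ℝ) + 1 ≤ (γ (n-j) : ℝ) := by
            have hz : m2 + ((n-j : ℕ) : ℤ) + 1 ≤ γ (n-j) := by omega
            have hc : (m2 : ℝ) + ((n-j : ℕ) : ℝ) + 1 ≤ ((γ (n-j) : ℤ) : ℝ) := by
              exact_mod_cast hz
            rw [hm2]; linarith
          left; left; left
          refine ⟨hA, fun p hp1 hp2 => ?_, hC⟩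
          by_cases hp : p = i
          · subst hp; exact ⟨hR1, hKi.2⟩
          · by_cases hq : p = n - j
            · subst hq; exact ⟨hLj.1, hR2⟩
            · exact hM p (by omega) (by omega)
      · have hR1 : Λ (i+1) - n/2 + i + 1 ≤ (γ i : ℝ) := by
          have hz : m1 + (i : ℤ) + 1 ≤ γ i := by omega
          have hc : (m1 : ℝ) + (i : ℝ) + 1 ≤ ((γ i : ℤ) : ℝ) := by exact_mod_cast hz
          rw [hm1]; linarith
        rcases le_or_gt (γ (n-j)) (m2 + ((n-j : ℕ) : ℤ)) with h2 | h2
        · -- S (i+1) (j+1)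
          have hR2 : (γ (n-j) : ℝ) ≤ Λ (n-j+2) - n/2 + ((n-j : ℕ) : ℝ) := by
            have hc : ((γ (n-j) : ℤ) : ℝ) ≤ (m2 : ℝ) + ((n-j : ℕ) : ℝ) := by
              exact_mod_cast h2
            rw [hm2]; linarith
          right
          refine ⟨fun p hp1 hp2 => ?_, fun p hp1 hp2 => hM p hp1 (by omega),
            fun p hp1 hp2 => ?_⟩
          · by_cases hp : p = i
            · subst hp; exact ⟨hKi.1, hR1⟩
            · exact hA p hp1 (by omega)
          · by_cases hp : p = n - j
            · subst hp; exact ⟨hR2, hLj.2⟩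
            · exact hC p (by omega) hp2
        · -- S (i+1) j
          have hR2 : Λ (n-j+2) - n/2 + ((n-j : ℕ) : ℝ) + 1 ≤ (γ (n-j) : ℝ) := by
            have hz : m2 + ((n-j : ℕ) : ℤ) + 1 ≤ γ (n-j) := by omega
            have hc : (m2 : ℝ) + ((n-j : ℕ) : ℝ) + 1 ≤ ((γ (n-j) : ℤ) : ℝ) := by
              exact_mod_cast hz
            rw [hm2]; linarith
          left; right
          refine ⟨fun p hp1 hp2 => ?_, fun p hp1 hp2 => ?_, hC⟩
          · by_cases hp : p = i
            · subst hp; exact ⟨hKi.1, hR1⟩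
            · exact hA p hp1 (by omega)
          · by_cases hp : p = n - j
            · subst hp; exact ⟨hLj.1, hR2⟩
            · exact hM p hp1 (by omega)
end

section
/- Under the stated interlacing hypotheses, for every k ∈ {1,…,n} one has the identity 1 = Σ_{p=1}^{n−1} A_p/(x_k − y_p) − Σ_{p=1}^{n−1} B_p/(x_k − y_p + 1). (All denominators occurring, including those inside A_p and B_p, are nonzero under the hypotheses.) -/
/-- `A_p = |Π_{m=1}^{n}(x_m − y_p) · Π_{m=1}^{n−2}(z_m − y_p − 1)|
        / |Π_{m=1, m≠p}^{n−1}(y_m − y_p)(y_m − y_p − 1)|`,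
the square `a_{p,n−1}(Q)²` of a Gelfand–Tsetlin coefficient. -/
def Acoef (n : ℕ) (x y z : ℕ → ℤ) (p : ℕ) : ℚ :=
  |(∏ m ∈ Finset.Icc 1 n, ((x m : ℚ) - y p)) *
     ∏ m ∈ Finset.Icc 1 (n-2), ((z m : ℚ) - y p - 1)| /
  |∏ m ∈ (Finset.Icc 1 (n-1)).erase p, ((y m : ℚ) - y p) * ((y m : ℚ) - y p - 1)|

/-- `B_p = |Π_{m=1}^{n}(x_m − y_p + 1) · Π_{m=1}^{n−2}(z_m − y_p)|
        / |Π_{m=1, m≠p}^{n−1}(y_m − y_p + 1)(y_m − y_p)|`,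
the square `b_{p,n−1}(Q)²` of a Gelfand–Tsetlin coefficient. -/
def Bcoef (n : ℕ) (x y z : ℕ → ℤ) (p : ℕ) : ℚ :=
  |(∏ m ∈ Finset.Icc 1 n, ((x m : ℚ) - y p + 1)) *
     ∏ m ∈ Finset.Icc 1 (n-2), ((z m : ℚ) - y p)| /
  |∏ m ∈ (Finset.Icc 1 (n-1)).erase p, ((y m : ℚ) - y p + 1) * ((y m : ℚ) - y p)|

open Finset Polynomial





lemma prod_neg_aux (s : Finset ℕ) (f : ℕ → ℚ) :
    ∏ i ∈ s, f i = (-1 : ℚ) ^ s.card * ∏ i ∈ s, (-f i) := by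
  have : ∏ i ∈ s, (-f i) = ∏ i ∈ s, ((-1 : ℚ) * f i) := by
    apply Finset.prod_congr rfl; intro i _; ring
  rw [this, Finset.prod_mul_distrib, Finset.prod_const, ← mul_assoc, ← mul_pow]
  simp

lemma sign_aux (n p : ℕ) (hp1 : 1 ≤ p) (hp2 : p ≤ n - 1) (hn : 2 ≤ n) (f g : ℕ → ℚ)
    (hf1 : ∀ m, 1 ≤ m → m ≤ p → 0 < f m) (hf2 : ∀ m, p < m → m ≤ n → f m < 0)
    (hg1 : ∀ m, 1 ≤ m → m < p → 0 ≤ g m) (hg2 : ∀ m, p ≤ m → m ≤ n - 2 → g m < 0) :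
    (∏ m ∈ Finset.Icc 1 n, f m) * ∏ m ∈ Finset.Icc 1 (n - 2), g m ≤ 0 := by
  have h1 : Finset.Icc 1 n = Finset.Ioc 0 n := Finset.Icc_add_one_left_eq_Ioc 0 n
  have h2 : Finset.Icc 1 (n - 2) = Finset.Ioc 0 (n - 2) := Finset.Icc_add_one_left_eq_Ioc 0 (n - 2)
  have hpn : p ≤ n := by omega
  have hpn2 : p - 1 ≤ n - 2 := by omega
  rw [h1, h2, ← Finset.prod_Ioc_consecutive f (Nat.zero_le p) hpn,
    ← Finset.prod_Ioc_consecutive g (Nat.zero_le (p - 1)) hpn2]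
  have hA : 0 < ∏ m ∈ Finset.Ioc 0 p, f m := by
    apply Finset.prod_pos; intro m hm; rw [Finset.mem_Ioc] at hm; exact hf1 m hm.1 hm.2
  have hB : ∏ m ∈ Finset.Ioc p n, f m
      = (-1 : ℚ) ^ (n - p) * ∏ m ∈ Finset.Ioc p n, (-f m) := by
    rw [← Nat.card_Ioc p n]; exact prod_neg_aux _ f
  have hB' : 0 < ∏ m ∈ Finset.Ioc p n, (-f m) := by
    apply Finset.prod_pos; intro m hm; rw [Finset.mem_Ioc] at hm
    have := hf2 m hm.1 hm.2; linarith
  have hC : 0 ≤ ∏ m ∈ Finset.Ioc 0 (p - 1), g m := by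
    apply Finset.prod_nonneg; intro m hm; rw [Finset.mem_Ioc] at hm
    exact hg1 m hm.1 (by omega)
  have hD : ∏ m ∈ Finset.Ioc (p - 1) (n - 2), g m
      = (-1 : ℚ) ^ (n - 1 - p) * ∏ m ∈ Finset.Ioc (p - 1) (n - 2), (-g m) := by
    rw [show n - 1 - p = n - 2 - (p - 1) by omega, ← Nat.card_Ioc (p - 1) (n - 2)]
    exact prod_neg_aux _ g
  have hD' : 0 ≤ ∏ m ∈ Finset.Ioc (p - 1) (n - 2), (-g m) := by
    apply Finset.prod_nonneg; intro m hm; rw [Finset.mem_Ioc] at hm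
    have := hg2 m (by omega) hm.2; linarith
  rw [hB, hD]
  have hpow : ((-1 : ℚ)) ^ (n - p) * (-1) ^ (n - 1 - p) = -1 := by
    rw [show n - p = (n - 1 - p) + 1 by omega, pow_succ]
    have : Even ((n - 1 - p) + (n - 1 - p)) := ⟨n - 1 - p, rfl⟩
    have he : ((-1 : ℚ)) ^ (n - 1 - p) * (-1) ^ (n - 1 - p) = 1 := by
      rw [← pow_add]; exact Even.neg_one_pow ⟨n - 1 - p, rfl⟩
    linear_combination (-1 : ℚ) * he
  have hkey : (∏ m ∈ Finset.Ioc 0 p, f m) * ((-1 : ℚ) ^ (n - p) * ∏ m ∈ Finset.Ioc p n, (-f m))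
      * ((∏ m ∈ Finset.Ioc 0 (p - 1), g m)
        * ((-1 : ℚ) ^ (n - 1 - p) * ∏ m ∈ Finset.Ioc (p - 1) (n - 2), (-g m)))
      = -(((∏ m ∈ Finset.Ioc 0 p, f m) * ∏ m ∈ Finset.Ioc p n, (-f m))
        * ((∏ m ∈ Finset.Ioc 0 (p - 1), g m) * ∏ m ∈ Finset.Ioc (p - 1) (n - 2), (-g m))) := by
    linear_combination ((∏ m ∈ Finset.Ioc 0 p, f m) * (∏ m ∈ Finset.Ioc p n, (-f m))
      * (∏ m ∈ Finset.Ioc 0 (p - 1), g m) * ∏ m ∈ Finset.Ioc (p - 1) (n - 2), (-g m)) * hpow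
  rw [hkey]
  apply neg_nonpos_of_nonneg
  apply mul_nonneg (mul_nonneg hA.le hB'.le) (mul_nonneg hC hD')

noncomputable def P1poly (n : ℕ) (x z : ℕ → ℤ) : Polynomial ℚ :=
  (∏ m ∈ Finset.Icc 1 n, (Polynomial.X - Polynomial.C ((x m : ℚ)))) *
    ∏ m ∈ Finset.Icc 1 (n - 2), (Polynomial.X - Polynomial.C ((z m : ℚ) - 1))

noncomputable def P2poly (n : ℕ) (y : ℕ → ℤ) : Polynomial ℚ :=
  ∏ m ∈ Finset.Icc 1 (n - 1),
    ((Polynomial.X - Polynomial.C ((y m : ℚ))) * (Polynomial.X - Polynomial.C ((y m : ℚ) - 1)))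

lemma P1_monic (n : ℕ) (x z : ℕ → ℤ) : (P1poly n x z).Monic := by
  refine Polynomial.Monic.mul ?_ ?_ <;>
    exact Polynomial.monic_prod_of_monic _ _ fun _ _ => Polynomial.monic_X_sub_C _

lemma P2_monic (n : ℕ) (y : ℕ → ℤ) : (P2poly n y).Monic :=
  Polynomial.monic_prod_of_monic _ _ fun _ _ =>
    (Polynomial.monic_X_sub_C _).mul (Polynomial.monic_X_sub_C _)

lemma P1_natDegree (n : ℕ) (hn : 2 ≤ n) (x z : ℕ → ℤ) :
    (P1poly n x z).natDegree = 2 * n - 2 := by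
  rw [P1poly, Polynomial.natDegree_mul
      (Polynomial.monic_prod_of_monic _ _ fun _ _ => Polynomial.monic_X_sub_C _).ne_zero
      (Polynomial.monic_prod_of_monic _ _ fun _ _ => Polynomial.monic_X_sub_C _).ne_zero,
    Polynomial.natDegree_prod_of_monic _ _ (fun _ _ => Polynomial.monic_X_sub_C _),
    Polynomial.natDegree_prod_of_monic _ _ (fun _ _ => Polynomial.monic_X_sub_C _),
    Finset.sum_congr rfl (fun m _ => Polynomial.natDegree_X_sub_C ((x m : ℚ))),
    Finset.sum_congr rfl (fun m _ => Polynomial.natDegree_X_sub_C ((z m : ℚ) - 1)),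
    Finset.sum_const, Finset.sum_const, Nat.card_Icc, Nat.card_Icc, smul_eq_mul, smul_eq_mul]
  omega

lemma P2_natDegree (n : ℕ) (hn : 2 ≤ n) (y : ℕ → ℤ) :
    (P2poly n y).natDegree = 2 * n - 2 := by
  rw [P2poly, Polynomial.natDegree_prod_of_monic _ _
    (fun _ _ => (Polynomial.monic_X_sub_C _).mul (Polynomial.monic_X_sub_C _))]
  have h : ∀ m ∈ Finset.Icc 1 (n-1),
      ((Polynomial.X - Polynomial.C ((y m : ℚ))) *
        (Polynomial.X - Polynomial.C ((y m : ℚ) - 1))).natDegree = 2 := by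
    intro m _
    rw [Polynomial.natDegree_mul (Polynomial.X_sub_C_ne_zero _) (Polynomial.X_sub_C_ne_zero _),
      Polynomial.natDegree_X_sub_C, Polynomial.natDegree_X_sub_C]
  rw [Finset.sum_congr rfl h, Finset.sum_const, Nat.card_Icc, smul_eq_mul]
  omega

lemma Q_degree (n : ℕ) (hn : 2 ≤ n) (x y z : ℕ → ℤ) :
    (P1poly n x z - P2poly n y).degree < ((2 * n - 2 : ℕ) : WithBot ℕ) := by
  have h1 := P1_monic n x z
  have h2 := P2_monic n y
  have e1 : (P1poly n x z).degree = ((2 * n - 2 : ℕ) : WithBot ℕ) := by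
    rw [Polynomial.degree_eq_natDegree h1.ne_zero, P1_natDegree n hn x z]
  have e2 : (P2poly n y).degree = ((2 * n - 2 : ℕ) : WithBot ℕ) := by
    rw [Polynomial.degree_eq_natDegree h2.ne_zero, P2_natDegree n hn y]
  have := Polynomial.degree_sub_lt (e1.trans e2.symm) h1.ne_zero
    (h1.leadingCoeff.trans h2.leadingCoeff.symm)
  rwa [e1] at this

noncomputable def vfun (y : ℕ → ℤ) : ℕ × Bool → ℚ :=
  fun i => if i.2 then (y i.1 : ℚ) - 1 else (y i.1 : ℚ)

lemma P1_eval_at (n : ℕ) (hn : 2 ≤ n) (x z : ℕ → ℤ) (c : ℚ) :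
    (P1poly n x z).eval c
      = (∏ m ∈ Finset.Icc 1 n, ((x m : ℚ) - c)) *
          ∏ m ∈ Finset.Icc 1 (n - 2), ((z m : ℚ) - 1 - c) := by
  rw [P1poly, Polynomial.eval_mul, Polynomial.eval_prod, Polynomial.eval_prod]
  have A : ∏ m ∈ Finset.Icc 1 n, Polynomial.eval c (Polynomial.X - Polynomial.C ((x m : ℚ)))
      = (-1 : ℚ) ^ n * ∏ m ∈ Finset.Icc 1 n, ((x m : ℚ) - c) := by
    rw [prod_neg_aux, Nat.card_Icc, show n + 1 - 1 = n by omega]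
    congr 1
    apply Finset.prod_congr rfl; intro m _; simp
  have B : ∏ m ∈ Finset.Icc 1 (n-2),
        Polynomial.eval c (Polynomial.X - Polynomial.C ((z m : ℚ) - 1))
      = (-1 : ℚ) ^ (n - 2) * ∏ m ∈ Finset.Icc 1 (n-2), ((z m : ℚ) - 1 - c) := by
    rw [prod_neg_aux, Nat.card_Icc, show n - 2 + 1 - 1 = n - 2 by omega]
    congr 1
    apply Finset.prod_congr rfl; intro m _; simp
  rw [A, B]
  have hpow : (-1 : ℚ) ^ n * (-1 : ℚ) ^ (n - 2) = 1 := by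
    rw [← pow_add]; exact Even.neg_one_pow ⟨n - 1, by omega⟩
  linear_combination ((∏ m ∈ Finset.Icc 1 n, ((x m : ℚ) - c)) *
    ∏ m ∈ Finset.Icc 1 (n-2), ((z m : ℚ) - 1 - c)) * hpow

lemma P2_eval_at (n : ℕ) (y : ℕ → ℤ) (c : ℚ) :
    (P2poly n y).eval c
      = ∏ m ∈ Finset.Icc 1 (n - 1), ((c - y m) * (c - y m + 1)) := by
  rw [P2poly, Polynomial.eval_prod]
  apply Finset.prod_congr rfl; intro m _
  simp only [Polynomial.eval_mul, Polynomial.eval_sub, Polynomial.eval_X, Polynomial.eval_C]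
  ring

lemma P2_root (n : ℕ) (y : ℕ → ℤ) (p : ℕ) (hp : p ∈ Finset.Icc 1 (n-1)) (b : Bool) :
    (P2poly n y).eval (vfun y (p, b)) = 0 := by
  rw [P2poly, Polynomial.eval_prod]
  apply Finset.prod_eq_zero hp
  cases b <;> simp [vfun]

lemma basis_eval (s : Finset (ℕ × Bool)) (v : ℕ × Bool → ℚ) (i : ℕ × Bool) (c : ℚ) :
    (Lagrange.basis s v i).eval c = ∏ j ∈ s.erase i, ((v i - v j)⁻¹ * (c - v j)) := by
  rw [Lagrange.basis, Polynomial.eval_prod]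
  apply Finset.prod_congr rfl; intro j _; simp [Lagrange.basisDivisor]

lemma erase_product_split (n : ℕ) (p : ℕ) (hp : p ∈ Finset.Icc 1 (n-1)) (b : Bool) :
    ((Finset.Icc 1 (n-1)) ×ˢ (Finset.univ : Finset Bool)).erase (p, b) =
      insert (p, !b) (((Finset.Icc 1 (n-1)).erase p) ×ˢ (Finset.univ : Finset Bool)) := by
  ext ⟨q, c⟩
  simp only [Finset.mem_erase, Finset.mem_insert, Finset.mem_product, Finset.mem_univ,
    and_true, Prod.ext_iff, Prod.mk.injEq]
  have hp' : 1 ≤ p ∧ p ≤ n - 1 := Finset.mem_Icc.mp hp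
  cases b <;> cases c <;> simp [Prod.ext_iff] <;> (try tauto) <;> omega

lemma prod_product_bool (t : Finset ℕ) (F : ℕ × Bool → ℚ) :
    ∏ j ∈ t ×ˢ (Finset.univ : Finset Bool), F j
      = ∏ q ∈ t, (F (q, false) * F (q, true)) := by
  rw [Finset.prod_product]
  apply Finset.prod_congr rfl; intro q _
  rw [Fintype.prod_bool, mul_comm]

noncomputable def NAq (n : ℕ) (x y z : ℕ → ℤ) (p : ℕ) : ℚ :=
  (∏ m ∈ Finset.Icc 1 n, ((x m : ℚ) - y p)) *
    ∏ m ∈ Finset.Icc 1 (n-2), ((z m : ℚ) - y p - 1)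

noncomputable def DAq (n : ℕ) (y : ℕ → ℤ) (p : ℕ) : ℚ :=
  ∏ m ∈ (Finset.Icc 1 (n-1)).erase p, (((y m : ℚ) - y p) * ((y m : ℚ) - y p - 1))

noncomputable def NBq (n : ℕ) (x y z : ℕ → ℤ) (p : ℕ) : ℚ :=
  (∏ m ∈ Finset.Icc 1 n, ((x m : ℚ) - y p + 1)) *
    ∏ m ∈ Finset.Icc 1 (n-2), ((z m : ℚ) - y p)

noncomputable def DBq (n : ℕ) (y : ℕ → ℤ) (p : ℕ) : ℚ :=
  ∏ m ∈ (Finset.Icc 1 (n-1)).erase p, (((y m : ℚ) - y p + 1) * ((y m : ℚ) - y p))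

lemma Acoef_eq (n : ℕ) (x y z : ℕ → ℤ) (p : ℕ) (hNA : NAq n x y z p ≤ 0)
    (hDA : 0 < DAq n y p) : Acoef n x y z p = (-(NAq n x y z p)) / DAq n y p := by
  simp only [Acoef, NAq, DAq] at *
  rw [abs_of_nonpos hNA, abs_of_pos hDA]

lemma Bcoef_eq (n : ℕ) (x y z : ℕ → ℤ) (p : ℕ) (hNB : NBq n x y z p ≤ 0)
    (hDB : 0 < DBq n y p) : Bcoef n x y z p = (-(NBq n x y z p)) / DBq n y p := by
  simp only [Bcoef, NBq, DBq] at *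
  rw [abs_of_nonpos hNB, abs_of_pos hDB]

lemma term_false_eval (n p : ℕ) (hn : 2 ≤ n) (x y z : ℕ → ℤ) (k : ℕ)
    (hp : p ∈ Finset.Icc 1 (n-1))
    (hNA : NAq n x y z p ≤ 0) (hDA : 0 < DAq n y p)
    (hc : ((x k : ℚ) - y p) ≠ 0) :
    (P1poly n x z - P2poly n y).eval (vfun y (p, false)) *
      (Lagrange.basis (Finset.Icc 1 (n-1) ×ˢ (Finset.univ : Finset Bool)) (vfun y)
        (p, false)).eval ((x k : ℚ))
    = -(Acoef n x y z p / ((x k : ℚ) - y p)) *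
        ∏ m ∈ Finset.Icc 1 (n-1), (((x k : ℚ) - y m) * ((x k : ℚ) - y m + 1)) := by
  have hQv : (P1poly n x z - P2poly n y).eval (vfun y (p, false)) = NAq n x y z p := by
    rw [Polynomial.eval_sub, P2_root n y p hp false, sub_zero,
      show vfun y (p, false) = ((y p : ℚ)) from rfl, P1_eval_at n hn, NAq]
    congr 1
    apply Finset.prod_congr rfl; intro m _; ring
  rw [hQv, basis_eval, erase_product_split n p hp false,
    Finset.prod_insert (by simp), prod_product_bool]
  have h1 : vfun y (p, false) - vfun y (p, !false) = 1 := by simp [vfun]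
  rw [h1, inv_one, one_mul]
  have h2 : ∀ q ∈ (Finset.Icc 1 (n-1)).erase p,
      ((vfun y (p,false) - vfun y (q,false))⁻¹ * ((x k : ℚ) - vfun y (q,false))) *
        ((vfun y (p,false) - vfun y (q,true))⁻¹ * ((x k : ℚ) - vfun y (q,true)))
      = (((x k : ℚ) - y q) * ((x k : ℚ) - y q + 1)) *
          ((((y q : ℚ) - y p) * ((y q : ℚ) - y p - 1)))⁻¹ := by
    intro q _
    simp only [vfun]
    rw [show ((y q : ℚ) - y p) * ((y q : ℚ) - y p - 1)
        = ((y p : ℚ) - (y q : ℚ)) * ((y p : ℚ) - ((y q : ℚ) - 1)) by ring, mul_inv]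
    norm_num
    ring
  have h3 : vfun y (p, !false) = (y p : ℚ) - 1 := rfl
  rw [h3, Finset.prod_congr rfl h2, Finset.prod_mul_distrib, Finset.prod_inv_distrib,
    Acoef_eq n x y z p hNA hDA, ← Finset.mul_prod_erase _ _ hp]
  simp only [DAq]
  have hcc : (((x k : ℚ)) - y p) * (((x k : ℚ)) - y p)⁻¹ = 1 := mul_inv_cancel₀ hc
  linear_combination (-(NAq n x y z p) * (((x k : ℚ)) - y p + 1) *
    (∏ q ∈ (Finset.Icc 1 (n-1)).erase p, (((x k : ℚ) - y q) * ((x k : ℚ) - y q + 1))) *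
    (∏ q ∈ (Finset.Icc 1 (n-1)).erase p, (((y q : ℚ) - y p) * ((y q : ℚ) - y p - 1)))⁻¹) * hcc

lemma term_true_eval (n p : ℕ) (hn : 2 ≤ n) (x y z : ℕ → ℤ) (k : ℕ)
    (hp : p ∈ Finset.Icc 1 (n-1))
    (hNB : NBq n x y z p ≤ 0) (hDB : 0 < DBq n y p)
    (hc : ((x k : ℚ) - y p + 1) ≠ 0) :
    (P1poly n x z - P2poly n y).eval (vfun y (p, true)) *
      (Lagrange.basis (Finset.Icc 1 (n-1) ×ˢ (Finset.univ : Finset Bool)) (vfun y)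
        (p, true)).eval ((x k : ℚ))
    = (Bcoef n x y z p / ((x k : ℚ) - y p + 1)) *
        ∏ m ∈ Finset.Icc 1 (n-1), (((x k : ℚ) - y m) * ((x k : ℚ) - y m + 1)) := by
  have hQv : (P1poly n x z - P2poly n y).eval (vfun y (p, true)) = NBq n x y z p := by
    rw [Polynomial.eval_sub, P2_root n y p hp true, sub_zero,
      show vfun y (p, true) = ((y p : ℚ) - 1) from rfl, P1_eval_at n hn, NBq]
    congr 1
    · apply Finset.prod_congr rfl; intro m _; ring
    · apply Finset.prod_congr rfl; intro m _; ring
  rw [hQv, basis_eval, erase_product_split n p hp true,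
    Finset.prod_insert (by simp), prod_product_bool]
  have h1 : vfun y (p, true) - vfun y (p, !true) = -1 := by simp [vfun]
  rw [h1, show ((-1 : ℚ))⁻¹ = -1 by norm_num]
  have h2 : ∀ q ∈ (Finset.Icc 1 (n-1)).erase p,
      ((vfun y (p,true) - vfun y (q,false))⁻¹ * ((x k : ℚ) - vfun y (q,false))) *
        ((vfun y (p,true) - vfun y (q,true))⁻¹ * ((x k : ℚ) - vfun y (q,true)))
      = (((x k : ℚ) - y q) * ((x k : ℚ) - y q + 1)) *
          ((((y q : ℚ) - y p + 1) * ((y q : ℚ) - y p)))⁻¹ := by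
    intro q _
    simp only [vfun]
    rw [show ((y q : ℚ) - y p + 1) * ((y q : ℚ) - y p)
        = ((y p : ℚ) - 1 - (y q : ℚ)) * ((y p : ℚ) - 1 - ((y q : ℚ) - 1)) by ring, mul_inv]
    norm_num
    ring
  have h3 : vfun y (p, !true) = (y p : ℚ) := rfl
  rw [h3, Finset.prod_congr rfl h2, Finset.prod_mul_distrib, Finset.prod_inv_distrib,
    Bcoef_eq n x y z p hNB hDB, ← Finset.mul_prod_erase _ _ hp]
  simp only [DBq]
  have hcc : (((x k : ℚ)) - y p + 1) * (((x k : ℚ)) - y p + 1)⁻¹ = 1 := mul_inv_cancel₀ hc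
  linear_combination ((NBq n x y z p) * (((x k : ℚ)) - y p) *
    (∏ q ∈ (Finset.Icc 1 (n-1)).erase p, (((x k : ℚ) - y q) * ((x k : ℚ) - y q + 1))) *
    (∏ q ∈ (Finset.Icc 1 (n-1)).erase p, (((y q : ℚ) - y p + 1) * ((y q : ℚ) - y p)))⁻¹) * hcc


/-- Let `n ≥ 2` and let integers `x_1,…,x_n`, `y_1,…,y_{n−1}`,
`z_1,…,z_{n−2}` satisfy the strict interlacing conditions `x_m > y_m > x_{m+1} + 1`
(`1 ≤ m ≤ n−1`) and `y_m > z_m > y_{m+1}` (`1 ≤ m ≤ n−2`).  Then for every `k ∈ {1,…,n}`: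
`1 = Σ_{p=1}^{n−1} A_p/(x_k − y_p) − Σ_{p=1}^{n−1} B_p/(x_k − y_p + 1)`. -/
theorem gt_coefficient_identity (n : ℕ) (hn : 2 ≤ n) (x y z : ℕ → ℤ)
    (hxy : ∀ m : ℕ, 1 ≤ m → m ≤ n-1 → y m < x m ∧ x (m+1) + 1 < y m)
    (hyz : ∀ m : ℕ, 1 ≤ m → m ≤ n-2 → z m < y m ∧ y (m+1) < z m)
    (k : ℕ) (hk1 : 1 ≤ k) (hk2 : k ≤ n) :
    (1 : ℚ) = (∑ p ∈ Finset.Icc 1 (n-1), Acoef n x y z p / ((x k : ℚ) - y p))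
            - ∑ p ∈ Finset.Icc 1 (n-1), Bcoef n x y z p / ((x k : ℚ) - y p + 1) := by
  -- integer preliminaries
  have hyx : ∀ m, 1 ≤ m → m ≤ n-1 → y m < x m := fun m h1 h2 => (hxy m h1 h2).1
  have hxy2 : ∀ m, 1 ≤ m → m ≤ n-1 → x (m+1) + 1 < y m := fun m h1 h2 => (hxy m h1 h2).2
  have hxstep : ∀ m, 1 ≤ m → m ≤ n-1 → x (m+1) + 2 ≤ x m := by
    intro m h1 h2; have := hyx m h1 h2; have := hxy2 m h1 h2; omega
  have hxmono : ∀ b, b ≤ n → ∀ a, 1 ≤ a → a ≤ b → x b ≤ x a := by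
    intro b
    induction b with
    | zero => intro _ a ha hab; omega
    | succ b ih =>
      intro hb a ha hab
      rcases Nat.eq_or_lt_of_le hab with h | h
      · rw [h]
      · have h1 : x b ≤ x a := ih (by omega) a ha (by omega)
        have h2 := hxstep b (by omega) (by omega)
        omega
  have hystep : ∀ m, 1 ≤ m → m + 1 ≤ n-1 → y (m+1) + 2 ≤ y m := by
    intro m h1 h2
    have := hyx (m+1) (by omega) h2
    have := hxy2 m h1 (by omega)
    omega
  have hymono : ∀ b, b ≤ n-1 → ∀ a, 1 ≤ a → a ≤ b → y b ≤ y a := by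
    intro b
    induction b with
    | zero => intro _ a ha hab; omega
    | succ b ih =>
      intro hb a ha hab
      rcases Nat.eq_or_lt_of_le hab with h | h
      · rw [h]
      · have h1 : y b ≤ y a := ih (by omega) a ha (by omega)
        have h2 := hystep b (by omega) (by omega)
        omega
  have hygap : ∀ a b, 1 ≤ a → a < b → b ≤ n-1 → y b + 2 ≤ y a := by
    intro a b ha hab hb
    have h1 := hystep a ha (by omega)
    have h2 := hymono b hb (a+1) (by omega) (by omega)
    omega
  have hxygt : ∀ m q, 1 ≤ m → m ≤ q → q ≤ n-1 → y q + 1 ≤ x m := by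
    intro m q h1 h2 h3
    have := hxmono q (by omega) m h1 h2
    have := hyx q (by omega) h3
    omega
  have hyxgt : ∀ m q, 1 ≤ q → q < m → m ≤ n → x m + 2 ≤ y q := by
    intro m q h1 h2 h3
    have := hxmono m h3 (q+1) (by omega) h2
    have := hxy2 q h1 (by omega)
    omega
  have hzy1 : ∀ m q, 1 ≤ m → m < q → q ≤ n-1 → y q + 1 ≤ z m := by
    intro m q h1 h2 h3
    have hz := (hyz m h1 (by omega)).2
    have := hymono q h3 (m+1) (by omega) h2
    omega
  have hzy2 : ∀ m q, 1 ≤ q → q ≤ m → m ≤ n-2 → z m + 1 ≤ y q := by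
    intro m q h1 h2 h3
    have hz := (hyz m (by omega) h3).1
    have := hymono m (by omega) q h1 h2
    omega
  -- sign facts
  have hNA : ∀ p, 1 ≤ p → p ≤ n-1 → NAq n x y z p ≤ 0 := by
    intro p h1 h2
    refine sign_aux n p h1 h2 hn _ _ ?_ ?_ ?_ ?_
    · intro m hm1 hm2
      have := hxygt m p hm1 hm2 h2
      have : (y p : ℚ) + 1 ≤ x m := by exact_mod_cast this
      linarith
    · intro m hm1 hm2
      have := hyxgt m p h1 hm1 hm2
      have : (x m : ℚ) + 2 ≤ y p := by exact_mod_cast this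
      linarith
    · intro m hm1 hm2
      have := hzy1 m p hm1 hm2 h2
      have : (y p : ℚ) + 1 ≤ z m := by exact_mod_cast this
      linarith
    · intro m hm1 hm2
      have := hzy2 m p h1 hm1 hm2
      have : (z m : ℚ) + 1 ≤ y p := by exact_mod_cast this
      linarith
  have hNB : ∀ p, 1 ≤ p → p ≤ n-1 → NBq n x y z p ≤ 0 := by
    intro p h1 h2
    refine sign_aux n p h1 h2 hn _ _ ?_ ?_ ?_ ?_
    · intro m hm1 hm2
      have := hxygt m p hm1 hm2 h2
      have : (y p : ℚ) + 1 ≤ x m := by exact_mod_cast this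
      linarith
    · intro m hm1 hm2
      have := hyxgt m p h1 hm1 hm2
      have : (x m : ℚ) + 2 ≤ y p := by exact_mod_cast this
      linarith
    · intro m hm1 hm2
      have := hzy1 m p hm1 hm2 h2
      have : (y p : ℚ) + 1 ≤ z m := by exact_mod_cast this
      linarith
    · intro m hm1 hm2
      have := hzy2 m p h1 hm1 hm2
      have : (z m : ℚ) + 1 ≤ y p := by exact_mod_cast this
      linarith
  have hDA : ∀ p, 1 ≤ p → p ≤ n-1 → 0 < DAq n y p := by
    intro p h1 h2
    apply Finset.prod_pos
    intro q hq
    rw [Finset.mem_erase, Finset.mem_Icc] at hq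
    rcases Nat.lt_or_ge q p with h | h
    · have := hygap q p hq.2.1 h h2
      have : (y p : ℚ) + 2 ≤ y q := by exact_mod_cast this
      nlinarith
    · have hqp : p < q := by omega
      have := hygap p q h1 hqp hq.2.2
      have : (y q : ℚ) + 2 ≤ y p := by exact_mod_cast this
      nlinarith
  have hDB : ∀ p, 1 ≤ p → p ≤ n-1 → 0 < DBq n y p := by
    intro p h1 h2
    apply Finset.prod_pos
    intro q hq
    rw [Finset.mem_erase, Finset.mem_Icc] at hq
    rcases Nat.lt_or_ge q p with h | h
    · have := hygap q p hq.2.1 h h2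
      have : (y p : ℚ) + 2 ≤ y q := by exact_mod_cast this
      nlinarith
    · have hqp : p < q := by omega
      have := hygap p q h1 hqp hq.2.2
      have : (y q : ℚ) + 2 ≤ y p := by exact_mod_cast this
      nlinarith
  have hpairD : ∀ m, 1 ≤ m → m ≤ n-1 →
      0 < ((x k : ℚ) - y m) * ((x k : ℚ) - y m + 1) := by
    intro m h1 h2
    rcases le_or_gt k m with h | h
    · have := hxygt k m hk1 h h2
      have : (y m : ℚ) + 1 ≤ x k := by exact_mod_cast this
      nlinarith
    · have := hyxgt k m h1 h hk2
      have : (x k : ℚ) + 2 ≤ y m := by exact_mod_cast this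
      nlinarith
  have hcA : ∀ m, 1 ≤ m → m ≤ n-1 → ((x k : ℚ) - y m) ≠ 0 := by
    intro m h1 h2
    intro h0
    have := hpairD m h1 h2
    rw [h0] at this
    simp at this
  have hcB : ∀ m, 1 ≤ m → m ≤ n-1 → ((x k : ℚ) - y m + 1) ≠ 0 := by
    intro m h1 h2
    intro h0
    have := hpairD m h1 h2
    rw [h0] at this
    simp at this
  have hDpos : 0 < ∏ m ∈ Finset.Icc 1 (n-1),
      (((x k : ℚ) - y m) * ((x k : ℚ) - y m + 1)) := by
    apply Finset.prod_pos
    intro m hm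
    rw [Finset.mem_Icc] at hm
    exact hpairD m hm.1 hm.2
  -- nodes & injectivity
  have hvinj : Set.InjOn (vfun y)
      ((Finset.Icc 1 (n-1) ×ˢ (Finset.univ : Finset Bool)) : Finset (ℕ × Bool)) := by
    rintro ⟨p, b⟩ hp ⟨q, c⟩ hq h
    have hp' := Finset.mem_Icc.mp (Finset.mem_product.mp (Finset.mem_coe.mp hp)).1
    have hq' := Finset.mem_Icc.mp (Finset.mem_product.mp (Finset.mem_coe.mp hq)).1
    rcases lt_trichotomy p q with hpq | hpq | hpq
    · exfalso
      have hgap := hygap p q hp'.1 hpq hq'.2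
      have hgap' : (y q : ℚ) + 2 ≤ y p := by exact_mod_cast hgap
      cases b <;> cases c <;> simp [vfun] at h <;> linarith
    · subst hpq
      cases b <;> cases c <;> simp [vfun] at h ⊢ <;> linarith
    · exfalso
      have hgap := hygap q p hq'.1 hpq hp'.2
      have hgap' : (y p : ℚ) + 2 ≤ y q := by exact_mod_cast hgap
      cases b <;> cases c <;> simp [vfun] at h <;> linarith
  have hcard : ((Finset.Icc 1 (n-1) ×ˢ (Finset.univ : Finset Bool)) : Finset (ℕ × Bool)).card
      = 2*n - 2 := by
    rw [Finset.card_product, Nat.card_Icc]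
    simp
    omega
  -- Lagrange interpolation
  have hkey := Lagrange.eq_interpolate (s := Finset.Icc 1 (n-1) ×ˢ (Finset.univ : Finset Bool))
    (v := vfun y) (f := P1poly n x z - P2poly n y) hvinj
    (by rw [hcard]; exact Q_degree n hn x y z)
  have hEval := congrArg (Polynomial.eval ((x k : ℚ))) hkey
  rw [Lagrange.interpolate_apply, Polynomial.eval_finset_sum] at hEval
  simp only [Polynomial.eval_mul, Polynomial.eval_C] at hEval
  have hRHS : Polynomial.eval ((x k : ℚ)) (P1poly n x z - P2poly n y)
      = -(∏ m ∈ Finset.Icc 1 (n-1), (((x k : ℚ) - y m) * ((x k : ℚ) - y m + 1))) := by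
    rw [Polynomial.eval_sub, P2_eval_at]
    have h0 : (P1poly n x z).eval ((x k : ℚ)) = 0 := by
      rw [P1poly, Polynomial.eval_mul, Polynomial.eval_prod]
      have : ∏ m ∈ Finset.Icc 1 n,
          Polynomial.eval ((x k : ℚ)) (Polynomial.X - Polynomial.C ((x m : ℚ))) = 0 :=
        Finset.prod_eq_zero (Finset.mem_Icc.mpr ⟨hk1, hk2⟩) (by simp)
      rw [this, zero_mul]
    rw [h0, zero_sub]
  rw [hRHS, Finset.sum_product] at hEval
  -- rewrite the inner sums
  have hterm : ∀ p ∈ Finset.Icc 1 (n-1),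
      (∑ b : Bool, (P1poly n x z - P2poly n y).eval (vfun y (p, b)) *
        (Lagrange.basis (Finset.Icc 1 (n-1) ×ˢ (Finset.univ : Finset Bool)) (vfun y)
          (p, b)).eval ((x k : ℚ)))
      = (Bcoef n x y z p / ((x k : ℚ) - y p + 1)) *
          (∏ m ∈ Finset.Icc 1 (n-1), (((x k : ℚ) - y m) * ((x k : ℚ) - y m + 1)))
        - (Acoef n x y z p / ((x k : ℚ) - y p)) *
          (∏ m ∈ Finset.Icc 1 (n-1), (((x k : ℚ) - y m) * ((x k : ℚ) - y m + 1))) := by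
    intro p hp
    have hp' := Finset.mem_Icc.mp hp
    rw [Fintype.sum_bool,
      term_true_eval n p hn x y z k hp (hNB p hp'.1 hp'.2) (hDB p hp'.1 hp'.2)
        (hcB p hp'.1 hp'.2),
      term_false_eval n p hn x y z k hp (hNA p hp'.1 hp'.2) (hDA p hp'.1 hp'.2)
        (hcA p hp'.1 hp'.2)]
    ring
  rw [Finset.sum_congr rfl hterm] at hEval
  rw [Finset.sum_sub_distrib, ← Finset.sum_mul, ← Finset.sum_mul] at hEval
  have hD0 : (∏ m ∈ Finset.Icc 1 (n-1),
      (((x k : ℚ) - y m) * ((x k : ℚ) - y m + 1))) ≠ 0 := ne_of_gt hDpos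
  have h2 : ((∑ p ∈ Finset.Icc 1 (n-1), Acoef n x y z p / ((x k : ℚ) - y p))
      - (∑ p ∈ Finset.Icc 1 (n-1), Bcoef n x y z p / ((x k : ℚ) - y p + 1)) - 1)
      * (∏ m ∈ Finset.Icc 1 (n-1), (((x k : ℚ) - y m) * ((x k : ℚ) - y m + 1))) = 0 := by
    linear_combination hEval
  rcases mul_eq_zero.mp h2 with h3 | h3
  · linarith
  · exact absurd h3 hD0
end

section
/- For any two distinct pairs (i,j) and (i',j') with 0 ≤ i, i' ≤ n, 1 ≤ j ≤ n+1−i and 1 ≤ j' ≤ n+1−i', the sets Box_{i,j} and Box_{i',j'} are disjoint: Box_{i,j} ∩ Box_{i',j'} = ∅. -/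
lemma Box_aux_i (n : ℕ) (Λ : ℕ → ℝ)
    (hdec : ∀ p : ℕ, 1 ≤ p → p ≤ n → Λ (p+1) < Λ p)
    (i j i' j' : ℕ) (hi' : i' ≤ n) (hlt : i < i') (lam : ℕ → ℤ)
    (h : lam ∈ Box n Λ i j) (h' : lam ∈ Box n Λ i' j') : False := by
  obtain ⟨h1, h2, h3⟩ := h
  obtain ⟨h1', _, _⟩ := h'
  have hlow : Λ (i+1) - n/2 + (i+1 : ℕ) ≤ lam (i+1) := (h1' (i+1) (by omega) (by omega)).2
  by_cases hc : ((i:ℤ)+1) ≤ (n : ℤ) - j + 1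
  · have hup : (lam (i+1) : ℝ) ≤ Λ (i+1) - n/2 + (i+1 : ℕ) - 1 :=
      (h2 (i+1) (by omega) (by push_cast; omega)).1
    linarith
  · have hup : (lam (i+1) : ℝ) ≤ Λ (i+1+1) - n/2 + (i+1 : ℕ) - 1 :=
      (h3 (i+1) (by push_cast; omega) (by omega)).1
    have := hdec (i+1) (by omega) (by omega)
    linarith

lemma Box_aux_j (n : ℕ) (Λ : ℕ → ℝ)
    (i j j' : ℕ) (hj2 : i + j ≤ n+1) (hj'1 : 1 ≤ j') (hlt : j' < j) (lam : ℕ → ℤ)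
    (h : lam ∈ Box n Λ i j) (h' : lam ∈ Box n Λ i j') : False := by
  obtain ⟨_, _, h3⟩ := h
  obtain ⟨_, h2', _⟩ := h'
  obtain ⟨p, hpz⟩ : ∃ p : ℕ, (p : ℤ) = (n : ℤ) + 2 - j := ⟨n + 2 - j, by omega⟩
  have hup : (lam p : ℝ) ≤ Λ (p+1) - n/2 + p - 1 :=
    (h3 p (by omega) (by omega)).1
  have hlow : Λ (p+1) - n/2 + p ≤ lam p :=
    (h2' p (by omega) (by omega)).2
  linarith

/-- Let `n ≥ 1` and let `Λ_1 > ⋯ > Λ_{n+1}` be a regular integral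
infinitesimal character.  For any two distinct pairs `(i,j)` and `(i',j')` with
`0 ≤ i, i' ≤ n`, `1 ≤ j ≤ n+1−i`, `1 ≤ j' ≤ n+1−i'`, the sets `Box_{i,j}` and
`Box_{i',j'}` are disjoint. -/
theorem Box_disjoint (n : ℕ) (hn : 1 ≤ n) (Λ : ℕ → ℝ)
    (hdec : ∀ p : ℕ, 1 ≤ p → p ≤ n → Λ (p+1) < Λ p)
    (hint : ∀ p : ℕ, 1 ≤ p → p ≤ n+1 → ∃ m : ℤ, Λ p = m + n/2)
    (i j i' j' : ℕ)
    (hi : i ≤ n) (hj1 : 1 ≤ j) (hj2 : i + j ≤ n+1)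
    (hi' : i' ≤ n) (hj'1 : 1 ≤ j') (hj'2 : i' + j' ≤ n+1)
    (hne : (i, j) ≠ (i', j')) :
    Box n Λ i j ∩ Box n Λ i' j' = ∅ := by
  rw [Set.eq_empty_iff_forall_notMem]
  rintro lam ⟨h, h'⟩
  have hii : i = i' := by
    rcases lt_trichotomy i i' with hc | hc | hc
    · exact absurd (Box_aux_i n Λ hdec i j i' j' hi' hc lam h h') not_false
    · exact hc
    · exact absurd (Box_aux_i n Λ hdec i' j' i j hi hc lam h' h) not_false
  subst hii
  have hjj : j ≠ j' := fun hj => hne (by rw [hj])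
  rcases lt_trichotomy j j' with hc | hc | hc
  · exact Box_aux_j n Λ i j' j hj'2 hj1 hc lam h' h
  · exact hjj hc
  · exact Box_aux_j n Λ i j j' hj2 hj'1 hc lam h h'
end

section
/- Let (i,j) with 0 ≤ i ≤ n and 1 ≤ j ≤ n+1−i, and let (i',j') = (i+a, j+b) where (a,b) ∈ {−1,0,1}² \ {(0,0)} and (i',j') also satisfies 0 ≤ i' ≤ n, 1 ≤ j' ≤ n+1−i'. Then the following are equivalent: (1) there exist λ ∈ Box_{i,j}, λ' ∈ Box_{i',j'}, an index k ∈ {1,…,n} and a sign ε ∈ {+1,−1} such that λ'_k = λ_k + ε and λ'_p = λ_p for all p ≠ k; (2) |a| + |b| = 1. -/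
/-- Base point of a box, in integer coordinates. -/
def BoxBase (n : ℕ) (m : ℕ → ℤ) (i j : ℕ) : ℕ → ℤ := fun p =>
  if p ≤ i then m p + p
  else if (p : ℤ) ≤ (n : ℤ) - j + 1 then m (p+1) + p
  else m (p+1) + p - 1

/-- Modify one coordinate. -/
def Tweak (f : ℕ → ℤ) (q : ℕ) (v : ℤ) : ℕ → ℤ := fun p => if p = q then v else f p

lemma Tweak_ne {f : ℕ → ℤ} {q : ℕ} {v : ℤ} {p : ℕ} (h : p ≠ q) : Tweak f q v p = f p :=
  if_neg h

lemma Tweak_eq (f : ℕ → ℤ) (q : ℕ) (v : ℤ) : Tweak f q v q = v := if_pos rfl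

lemma BoxBase_lo {n : ℕ} {m : ℕ → ℤ} {i j p : ℕ} (h : p ≤ i) :
    BoxBase n m i j p = m p + p := if_pos h

lemma BoxBase_mid {n : ℕ} {m : ℕ → ℤ} {i j p : ℕ} (h1 : ¬ p ≤ i)
    (h2 : (p : ℤ) ≤ (n : ℤ) - j + 1) : BoxBase n m i j p = m (p+1) + p := by
  unfold BoxBase; rw [if_neg h1, if_pos h2]

lemma BoxBase_hi {n : ℕ} {m : ℕ → ℤ} {i j p : ℕ} (h1 : ¬ p ≤ i)
    (h2 : ¬ (p : ℤ) ≤ (n : ℤ) - j + 1) : BoxBase n m i j p = m (p+1) + p - 1 := by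
  unfold BoxBase; rw [if_neg h1, if_neg h2]

/-- Sufficient integer conditions for membership in a box. -/
lemma mem_box (n : ℕ) (Λ : ℕ → ℝ) (m : ℕ → ℤ)
    (hm : ∀ p : ℕ, 1 ≤ p → p ≤ n+1 → Λ p = m p + n/2)
    (i j : ℕ) (hi : i ≤ n) (hj1 : 1 ≤ j) (lam : ℕ → ℤ)
    (h1 : ∀ p : ℕ, 1 ≤ p → p ≤ i →
        (2 ≤ p → lam p ≤ m (p-1) + p - 1) ∧ m p + p ≤ lam p)
    (h2 : ∀ p : ℕ, i + 1 ≤ p → (p : ℤ) ≤ (n : ℤ) - j + 1 →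
        lam p ≤ m p + p - 1 ∧ m (p+1) + p ≤ lam p)
    (h3 : ∀ p : ℕ, (n : ℤ) - j + 2 ≤ (p : ℤ) → p ≤ n →
        lam p ≤ m (p+1) + p - 1 ∧ ((p : ℤ) ≤ (n : ℤ) - 1 → m (p+2) + p ≤ lam p)) :
    lam ∈ Box n Λ i j := by
  refine ⟨fun p hp1 hp2 => ?_, fun p hp1 hp2 => ?_, fun p hp1 hp2 => ?_⟩
  · obtain ⟨ha, hb⟩ := h1 p hp1 hp2
    refine ⟨fun hp3 => ?_, ?_⟩
    · rw [hm (p-1) (by omega) (by omega)]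
      have h' : (lam p : ℝ) ≤ (m (p-1) : ℝ) + p - 1 := by exact_mod_cast ha hp3
      linarith
    · rw [hm p (by omega) (by omega)]
      have h' : (m p : ℝ) + p ≤ lam p := by exact_mod_cast hb
      linarith
  · obtain ⟨ha, hb⟩ := h2 p hp1 hp2
    constructor
    · rw [hm p (by omega) (by omega)]
      have h' : (lam p : ℝ) ≤ (m p : ℝ) + p - 1 := by exact_mod_cast ha
      linarith
    · rw [hm (p+1) (by omega) (by omega)]
      have h' : (m (p+1) : ℝ) + p ≤ lam p := by exact_mod_cast hb
      linarith
  · obtain ⟨ha, hb⟩ := h3 p hp1 hp2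
    constructor
    · rw [hm (p+1) (by omega) (by omega)]
      have h' : (lam p : ℝ) ≤ (m (p+1) : ℝ) + p - 1 := by exact_mod_cast ha
      linarith
    · intro hp4
      rw [hm (p+2) (by omega) (by omega)]
      have h' : (m (p+2) : ℝ) + p ≤ lam p := by exact_mod_cast hb hp4
      linarith

/-- Horizontal adjacency: boxes `(i,j)` and `(i+1,j)` are adjacent at coordinate `i+1`. -/
lemma adjA (n : ℕ) (Λ : ℕ → ℝ) (m : ℕ → ℤ)
    (hm : ∀ p : ℕ, 1 ≤ p → p ≤ n+1 → Λ p = m p + n/2)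
    (hmdec : ∀ p : ℕ, 1 ≤ p → p ≤ n → m (p+1) + 1 ≤ m p)
    (i j : ℕ) (hi : i + 1 ≤ n) (hj1 : 1 ≤ j) (hij : i + 1 + j ≤ n + 1) :
    ∃ lam ∈ Box n Λ i j, ∃ lam' ∈ Box n Λ (i+1) j,
      lam' (i+1) = lam (i+1) + 1 ∧ ∀ p : ℕ, p ≠ i+1 → lam' p = lam p := by
  refine ⟨Tweak (BoxBase n m i j) (i+1) (m (i+1) + (i+1) - 1), ?_,
          Tweak (BoxBase n m i j) (i+1) (m (i+1) + (i+1)), ?_,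
          by rw [Tweak_eq, Tweak_eq]; ring,
          fun p hp => by rw [Tweak_ne hp, Tweak_ne hp]⟩
  · refine mem_box n Λ m hm i j (by omega) hj1 _ ?_ ?_ ?_
    · intro p hp1 hp2
      rw [Tweak_ne (by omega), BoxBase_lo hp2]
      refine ⟨fun hp3 => ?_, le_refl _⟩
      have h := hmdec (p-1) (by omega) (by omega)
      have e2 : p - 1 + 1 = p := by omega
      rw [e2] at h
      omega
    · intro p hp1 hp2
      rcases eq_or_ne p (i+1) with rfl | hne
      · rw [Tweak_eq]
        have h := hmdec (i+1) (by omega) (by omega)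
        omega
      · rw [Tweak_ne hne, BoxBase_mid (by omega) hp2]
        have h := hmdec p (by omega) (by omega)
        omega
    · intro p hp1 hp2
      rw [Tweak_ne (by omega), BoxBase_hi (by omega) (by omega)]
      refine ⟨le_refl _, fun hp4 => ?_⟩
      have h := hmdec (p+1) (by omega) (by omega)
      have e2 : p + 1 + 1 = p + 2 := by omega
      rw [e2] at h
      omega
  · refine mem_box n Λ m hm (i+1) j hi hj1 _ ?_ ?_ ?_
    · intro p hp1 hp2
      rcases eq_or_ne p (i+1) with rfl | hne
      · rw [Tweak_eq]
        refine ⟨fun hp3 => ?_, le_refl _⟩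
        have h := hmdec i (by omega) (by omega)
        have e2 : i + 1 - 1 = i := by omega
        rw [e2]
        omega
      · rw [Tweak_ne hne, BoxBase_lo (by omega)]
        refine ⟨fun hp3 => ?_, le_refl _⟩
        have h := hmdec (p-1) (by omega) (by omega)
        have e2 : p - 1 + 1 = p := by omega
        rw [e2] at h
        omega
    · intro p hp1 hp2
      rw [Tweak_ne (by omega), BoxBase_mid (by omega) hp2]
      have h := hmdec p (by omega) (by omega)
      omega
    · intro p hp1 hp2
      rw [Tweak_ne (by omega), BoxBase_hi (by omega) (by omega)]
      refine ⟨le_refl _, fun hp4 => ?_⟩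
      have h := hmdec (p+1) (by omega) (by omega)
      have e2 : p + 1 + 1 = p + 2 := by omega
      rw [e2] at h
      omega

/-- Vertical adjacency: boxes `(i,j)` and `(i,j+1)` are adjacent at coordinate `n-j+1`. -/
lemma adjB (n : ℕ) (Λ : ℕ → ℝ) (m : ℕ → ℤ)
    (hm : ∀ p : ℕ, 1 ≤ p → p ≤ n+1 → Λ p = m p + n/2)
    (hmdec : ∀ p : ℕ, 1 ≤ p → p ≤ n → m (p+1) + 1 ≤ m p)
    (i j : ℕ) (hj1 : 1 ≤ j) (hij : i + j + 1 ≤ n + 1) :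
    ∃ lam ∈ Box n Λ i j, ∃ lam' ∈ Box n Λ i (j+1),
      lam' (n-j+1) = lam (n-j+1) - 1 ∧ ∀ p : ℕ, p ≠ n-j+1 → lam' p = lam p := by
  have hjn : j ≤ n := by omega
  refine ⟨Tweak (BoxBase n m i (j+1)) (n-j+1) (m (n-j+1+1) + (n-j+1)), ?_,
          Tweak (BoxBase n m i (j+1)) (n-j+1) (m (n-j+1+1) + (n-j+1) - 1), ?_,
          by rw [Tweak_eq, Tweak_eq], fun p hp => by rw [Tweak_ne hp, Tweak_ne hp]⟩
  · refine mem_box n Λ m hm i j (by omega) hj1 _ ?_ ?_ ?_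
    · intro p hp1 hp2
      rw [Tweak_ne (by omega), BoxBase_lo hp2]
      refine ⟨fun hp3 => ?_, le_refl _⟩
      have h := hmdec (p-1) (by omega) (by omega)
      have e2 : p - 1 + 1 = p := by omega
      rw [e2] at h
      omega
    · intro p hp1 hp2
      rcases eq_or_ne p (n-j+1) with rfl | hne
      · rw [Tweak_eq]
        have h := hmdec (n-j+1) (by omega) (by omega)
        omega
      · rw [Tweak_ne hne, BoxBase_mid (by omega) (by omega)]
        have h := hmdec p (by omega) (by omega)
        omega
    · intro p hp1 hp2
      rw [Tweak_ne (by omega), BoxBase_hi (by omega) (by omega)]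
      refine ⟨le_refl _, fun hp4 => ?_⟩
      have h := hmdec (p+1) (by omega) (by omega)
      have e2 : p + 1 + 1 = p + 2 := by omega
      rw [e2] at h
      omega
  · refine mem_box n Λ m hm i (j+1) (by omega) (by omega) _ ?_ ?_ ?_
    · intro p hp1 hp2
      rw [Tweak_ne (by omega), BoxBase_lo hp2]
      refine ⟨fun hp3 => ?_, le_refl _⟩
      have h := hmdec (p-1) (by omega) (by omega)
      have e2 : p - 1 + 1 = p := by omega
      rw [e2] at h
      omega
    · intro p hp1 hp2
      rw [Tweak_ne (by omega), BoxBase_mid (by omega) hp2]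
      have h := hmdec p (by omega) (by omega)
      omega
    · intro p hp1 hp2
      rcases eq_or_ne p (n-j+1) with rfl | hne
      · rw [Tweak_eq]
        refine ⟨by omega, fun hp4 => ?_⟩
        have h := hmdec (n-j+1+1) (by omega) (by omega)
        have e2 : n - j + 1 + 1 + 1 = n - j + 1 + 2 := by omega
        rw [e2] at h
        omega
      · rw [Tweak_ne hne, BoxBase_hi (by omega) (by omega)]
        refine ⟨le_refl _, fun hp4 => ?_⟩
        have h := hmdec (p+1) (by omega) (by omega)
        have e2 : p + 1 + 1 = p + 2 := by omega
        rw [e2] at h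
        omega


/-- Let `n ≥ 1`, let `Λ_1 > ⋯ > Λ_{n+1}` be a regular integral
infinitesimal character, let `(i,j)` satisfy `0 ≤ i ≤ n`, `1 ≤ j ≤ n+1−i`, and let
`(i',j') = (i+a, j+b)` with `(a,b) ∈ {−1,0,1}² \ {(0,0)}` also satisfy `0 ≤ i' ≤ n`,
`1 ≤ j' ≤ n+1−i'`.  Then the following are equivalent:
(1) there exist `λ ∈ Box_{i,j}`, `λ' ∈ Box_{i',j'}`, an index `k ∈ {1,…,n}` and a sign
`ε = ±1` with `λ'_k = λ_k + ε` and `λ'_p = λ_p` for all `p ≠ k` (in `{1,…,n}`);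
(2) `|a| + |b| = 1`. -/
theorem Box_adjacent_iff (n : ℕ) (hn : 1 ≤ n) (Λ : ℕ → ℝ)
    (hdec : ∀ p : ℕ, 1 ≤ p → p ≤ n → Λ (p+1) < Λ p)
    (hint : ∀ p : ℕ, 1 ≤ p → p ≤ n+1 → ∃ m : ℤ, Λ p = m + n/2)
    (i j : ℕ) (hi : i ≤ n) (hj1 : 1 ≤ j) (hj2 : i + j ≤ n+1)
    (a b : ℤ) (ha : |a| ≤ 1) (hb : |b| ≤ 1) (hab : ¬(a = 0 ∧ b = 0))
    (i' j' : ℕ) (hi'a : (i' : ℤ) = i + a) (hj'b : (j' : ℤ) = j + b)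
    (hi' : i' ≤ n) (hj'1 : 1 ≤ j') (hj'2 : i' + j' ≤ n+1) :
    ((∃ lam ∈ Box n Λ i j, ∃ lam' ∈ Box n Λ i' j', ∃ k : ℕ, 1 ≤ k ∧ k ≤ n ∧
        ∃ ε : ℤ, (ε = 1 ∨ ε = -1) ∧ lam' k = lam k + ε ∧
          ∀ p : ℕ, 1 ≤ p → p ≤ n → p ≠ k → lam' p = lam p)
      ↔ |a| + |b| = 1) := by
  have hM : ∃ m : ℕ → ℤ, ∀ p : ℕ, 1 ≤ p → p ≤ n+1 → Λ p = m p + n/2 := by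
    refine ⟨fun p => if h : 1 ≤ p ∧ p ≤ n+1 then Classical.choose (hint p h.1 h.2) else 0, ?_⟩
    intro p h1 h2
    have hc : 1 ≤ p ∧ p ≤ n+1 := ⟨h1, h2⟩
    simp only [dif_pos hc]
    exact Classical.choose_spec (hint p h1 h2)
  obtain ⟨m, hm⟩ := hM
  have hmdec : ∀ p : ℕ, 1 ≤ p → p ≤ n → m (p+1) + 1 ≤ m p := by
    intro p h1 h2
    have hlt := hdec p h1 h2
    rw [hm p h1 (by omega), hm (p+1) (by omega) (by omega)] at hlt
    have h' : (m (p+1) : ℝ) < m p := by linarith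
    exact_mod_cast Int.add_one_le_iff.mpr (by exact_mod_cast h')
  have ha' : a = -1 ∨ a = 0 ∨ a = 1 := by rcases abs_le.mp ha with ⟨u, v⟩; omega
  have hb' : b = -1 ∨ b = 0 ∨ b = 1 := by rcases abs_le.mp hb with ⟨u, v⟩; omega
  constructor
  · rintro ⟨lam, hlam, lam', hlam', k, hk1, hk2, ε, hε, hεk, heq⟩
    obtain ⟨C1, C2, C3⟩ := hlam
    obtain ⟨D1, D2, D3⟩ := hlam'
    have forceK : ∀ p : ℕ, 1 ≤ p → p ≤ n → lam' p ≠ lam p → p = k := by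
      intro p h1 h2 hne; by_contra h; exact hne (heq p h1 h2 h)
    have hband : ∀ p : ℕ, 1 ≤ p → p ≤ n → lam p - 1 ≤ lam' p ∧ lam' p ≤ lam p + 1 := by
      intro p h1 h2
      rcases eq_or_ne p k with rfl | hne
      · rcases hε with rfl | rfl <;> omega
      · rw [heq p h1 h2 hne]; omega
    rcases ha' with rfl | rfl | rfl
    · rcases hb' with rfl | rfl | rfl
      · -- a = -1, b = -1
        exfalso
        have h1i : 1 ≤ i := by omega
        have h2j : 2 ≤ j := by omega
        have hii : i' = i - 1 := by omega
        have hjj : j' = j - 1 := by omega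
        subst hii hjj
        have hlo1 := (C1 i h1i le_rfl).2
        have hup1 := (D2 i (by omega) (by omega)).1
        have hne1 : lam' i ≠ lam i := by intro h; rw [h] at hup1; linarith
        have hk1' := forceK i h1i (by omega) hne1
        have hup2 := (C3 (n-j+2) (by omega) (by omega)).1
        have hlo2 := (D2 (n-j+2) (by omega) (by omega)).2
        have hne2 : lam' (n-j+2) ≠ lam (n-j+2) := by intro h; rw [h] at hlo2; linarith
        have hk2' := forceK (n-j+2) (by omega) (by omega) hne2
        omega
      · -- a = -1, b = 0
        norm_num
      · -- a = -1, b = 1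
        exfalso
        have h1i : 1 ≤ i := by omega
        have hii : i' = i - 1 := by omega
        have hjj : j' = j + 1 := by omega
        subst hii hjj
        rcases le_or_gt (i + j) n with hle | hgt
        · have hlo1 := (C1 i h1i le_rfl).2
          have hup1 := (D2 i (by omega) (by omega)).1
          have hne1 : lam' i ≠ lam i := by intro h; rw [h] at hup1; linarith
          have hk1' := forceK i h1i (by omega) hne1
          have hlo2 := (C2 (n-j+1) (by omega) (by omega)).2
          have hup2 := (D3 (n-j+1) (by omega) (by omega)).1
          have hne2 : lam' (n-j+1) ≠ lam (n-j+1) := by intro h; rw [h] at hup2; linarith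
          have hk2' := forceK (n-j+1) (by omega) (by omega) hne2
          omega
        · have hlo := (C1 i h1i le_rfl).2
          have hup := (D3 i (by omega) (by omega)).1
          have hd := hdec i h1i (by omega)
          have hb1 := (hband i h1i (by omega)).1
          have hb1' : (lam i : ℝ) - 1 ≤ lam' i := by exact_mod_cast hb1
          linarith
    · rcases hb' with rfl | rfl | rfl
      · -- a = 0, b = -1
        norm_num
      · -- a = 0, b = 0
        exact absurd ⟨rfl, rfl⟩ hab
      · -- a = 0, b = 1
        norm_num
    · rcases hb' with rfl | rfl | rfl
      · -- a = 1, b = -1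
        exfalso
        have h2j : 2 ≤ j := by omega
        have hii : i' = i + 1 := by omega
        have hjj : j' = j - 1 := by omega
        subst hii hjj
        rcases le_or_gt (i + j) n with hle | hgt
        · have hup1 := (C2 (i+1) le_rfl (by omega)).1
          have hlo1 := (D1 (i+1) (by omega) le_rfl).2
          have hne1 : lam' (i+1) ≠ lam (i+1) := by intro h; rw [h] at hlo1; linarith
          have hk1' := forceK (i+1) (by omega) (by omega) hne1
          have hup2 := (C3 (n-j+2) (by omega) (by omega)).1
          have hlo2 := (D2 (n-j+2) (by omega) (by omega)).2
          have hne2 : lam' (n-j+2) ≠ lam (n-j+2) := by intro h; rw [h] at hlo2; linarith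
          have hk2' := forceK (n-j+2) (by omega) (by omega) hne2
          omega
        · have hup := (C3 (i+1) (by omega) (by omega)).1
          have hlo := (D1 (i+1) (by omega) le_rfl).2
          have hd := hdec (i+1) (by omega) (by omega)
          have hb1 := (hband (i+1) (by omega) (by omega)).2
          have hb1' : (lam' (i+1) : ℝ) ≤ (lam (i+1) : ℝ) + 1 := by exact_mod_cast hb1
          linarith
      · -- a = 1, b = 0
        norm_num
      · -- a = 1, b = 1
        exfalso
        have hii : i' = i + 1 := by omega
        have hjj : j' = j + 1 := by omega
        subst hii hjj
        have hup1 := (C2 (i+1) le_rfl (by omega)).1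
        have hlo1 := (D1 (i+1) (by omega) le_rfl).2
        have hne1 : lam' (i+1) ≠ lam (i+1) := by intro h; rw [h] at hlo1; linarith
        have hk1' := forceK (i+1) (by omega) (by omega) hne1
        have hlo2 := (C2 (n-j+1) (by omega) (by omega)).2
        have hup2 := (D3 (n-j+1) (by omega) (by omega)).1
        have hne2 : lam' (n-j+1) ≠ lam (n-j+1) := by intro h; rw [h] at hup2; linarith
        have hk2' := forceK (n-j+1) (by omega) (by omega) hne2
        omega
  · intro habs
    rcases ha' with rfl | rfl | rfl
    · rcases hb' with rfl | rfl | rfl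
      · norm_num at habs
      · -- a = -1, b = 0
        have h1i : 1 ≤ i := by omega
        have hii : i' = i - 1 := by omega
        have hjj : j = j' := by omega
        subst hii hjj
        obtain ⟨lam, h1, lam', h2, hE, hO⟩ :=
          adjA n Λ m hm hmdec (i-1) j (by omega) hj1 (by omega)
        have e : i - 1 + 1 = i := by omega
        rw [e] at h2 hE hO
        exact ⟨lam', h2, lam, h1, i, h1i, by omega, -1, Or.inr rfl, by omega,
          fun p _ _ hp => (hO p hp).symm⟩
      · -- a = -1, b = 1
        norm_num at habs
    · rcases hb' with rfl | rfl | rfl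
      · -- a = 0, b = -1
        have h2j : 2 ≤ j := by omega
        have hii : i = i' := by omega
        have hjj : j' = j - 1 := by omega
        subst hii hjj
        obtain ⟨lam, h1, lam', h2, hE, hO⟩ :=
          adjB n Λ m hm hmdec i (j-1) (by omega) (by omega)
        have e : j - 1 + 1 = j := by omega
        rw [e] at h2
        exact ⟨lam', h2, lam, h1, n-(j-1)+1, by omega, by omega, 1, Or.inl rfl, by omega,
          fun p _ _ hp => (hO p hp).symm⟩
      · norm_num at habs
      · -- a = 0, b = 1
        have hii : i = i' := by omega
        have hjj : j' = j + 1 := by omega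
        subst hii hjj
        obtain ⟨lam, h1, lam', h2, hE, hO⟩ :=
          adjB n Λ m hm hmdec i j hj1 (by omega)
        exact ⟨lam, h1, lam', h2, n-j+1, by omega, by omega, -1, Or.inr rfl, by omega,
          fun p _ _ hp => hO p hp⟩
    · rcases hb' with rfl | rfl | rfl
      · norm_num at habs
      · -- a = 1, b = 0
        have hii : i' = i + 1 := by omega
        have hjj : j = j' := by omega
        subst hii hjj
        obtain ⟨lam, h1, lam', h2, hE, hO⟩ :=
          adjA n Λ m hm hmdec i j (by omega) hj1 (by omega)
        exact ⟨lam, h1, lam', h2, i+1, by omega, by omega, 1, Or.inl rfl, hE,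
          fun p _ _ hp => hO p hp⟩
      · norm_num at habs
end

section
/- Let 1 ≤ i ≤ n and 2 ≤ j ≤ n+1−i, and let λ ∈ Box_{i,j} and λ' ∈ Box_{i−1,j}. Then there exist an index k ∈ {1,…,n} and a sign ε ∈ {+1,−1} with λ'_k = λ_k + ε and λ'_p = λ_p for all p ≠ k if and only if λ_i = Λ_i − n/2 + i, λ'_i = Λ_i − n/2 + i − 1, and λ'_p = λ_p for all p ≠ i. -/
/-- Let `n ≥ 1`, let `Λ_1 > ⋯ > Λ_{n+1}` be a regular integral
infinitesimal character, let `1 ≤ i ≤ n`, `2 ≤ j ≤ n+1−i`, and let `λ ∈ Box_{i,j}`,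
`λ' ∈ Box_{i−1,j}`.  Then there exist `k ∈ {1,…,n}` and a sign `ε = ±1` with
`λ'_k = λ_k + ε` and `λ'_p = λ_p` for all `p ≠ k` (in `{1,…,n}`) if and only if
`λ_i = Λ_i − n/2 + i`, `λ'_i = Λ_i − n/2 + i − 1`, and `λ'_p = λ_p` for all `p ≠ i`. -/
theorem Box_adjacent_char (n : ℕ) (hn : 1 ≤ n) (Λ : ℕ → ℝ)
    (hdec : ∀ p : ℕ, 1 ≤ p → p ≤ n → Λ (p+1) < Λ p)
    (hint : ∀ p : ℕ, 1 ≤ p → p ≤ n+1 → ∃ m : ℤ, Λ p = m + n/2)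
    (i j : ℕ) (hi1 : 1 ≤ i) (hi2 : i ≤ n) (hj1 : 2 ≤ j) (hj2 : i + j ≤ n+1)
    (lam lam' : ℕ → ℤ) (hlam : lam ∈ Box n Λ i j) (hlam' : lam' ∈ Box n Λ (i-1) j) :
    ((∃ k : ℕ, 1 ≤ k ∧ k ≤ n ∧ ∃ ε : ℤ, (ε = 1 ∨ ε = -1) ∧ lam' k = lam k + ε ∧
        ∀ p : ℕ, 1 ≤ p → p ≤ n → p ≠ k → lam' p = lam p)
      ↔ ((lam i : ℝ) = Λ i - n/2 + i ∧ (lam' i : ℝ) = Λ i - n/2 + i - 1 ∧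
          ∀ p : ℕ, 1 ≤ p → p ≤ n → p ≠ i → lam' p = lam p)) := by
  -- Key bounds at coordinate i
  have hlow : Λ i - n/2 + i ≤ (lam i : ℝ) := (hlam.1 i hi1 le_rfl).2
  have hup : (lam' i : ℝ) ≤ Λ i - n/2 + i - 1 := by
    have := (hlam'.2.1 i (by omega) (by push_cast; omega)).1
    simpa using this
  have hlt : lam' i ≤ lam i - 1 := by
    have : (lam' i : ℝ) ≤ (lam i : ℝ) - 1 := by linarith
    exact_mod_cast this
  constructor
  · rintro ⟨k, hk1, hk2, ε, hε, hεk, hother⟩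
    have hki : k = i := by
      by_contra h
      have := hother i hi1 hi2 (Ne.symm h)
      omega
    subst hki
    have hεval : ε = -1 := by rcases hε with h | h <;> omega
    subst hεval
    have heq : (lam' k : ℝ) = (lam k : ℝ) - 1 := by
      rw [hεk]; push_cast; ring
    have hlam_eq : (lam k : ℝ) = Λ k - n/2 + k := by linarith
    refine ⟨hlam_eq, by linarith, fun p hp1 hp2 hpi => hother p hp1 hp2 hpi⟩
  · rintro ⟨h1, h2, hother⟩
    refine ⟨i, hi1, hi2, -1, Or.inr rfl, ?_, hother⟩
    have : (lam' i : ℝ) = (lam i : ℝ) + (-1 : ℤ) := by push_cast; linarith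
    exact_mod_cast this
end

section
/- Let γ ∈ S_{i,j}, where 1 ≤ i ≤ n−1 and 2 ≤ j ≤ n+1−i, and let (k,l) satisfy 0 ≤ k ≤ n and 1 ≤ l ≤ n+1−k. Then the following are equivalent: (1) for every λ ∈ Box_{k,l} there exists μ = (μ_1,…,μ_{n−1}) ∈ ℤ^{n−1} such that λ_p ≥ μ_p ≥ λ_{p+1} for 1 ≤ p ≤ n−1 and μ_p ≥ γ_p ≥ μ_{p+1} for 1 ≤ p ≤ n−2; (2) |k−i| ≤ 1 and |l−j| ≤ 1. -/
def BoxInt (n : ℕ) (A : ℕ → ℤ) (k l : ℕ) : Set (ℕ → ℤ) :=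
  {lam | (∀ p : ℕ, 1 ≤ p → p ≤ k → (2 ≤ p → lam p ≤ A (p-1)) ∧ A p ≤ lam p)
       ∧ (∀ p : ℕ, k + 1 ≤ p → (p : ℤ) ≤ (n : ℤ) - l + 1 → lam p ≤ A p - 1 ∧ A (p+1) - 1 ≤ lam p)
       ∧ (∀ p : ℕ, (n : ℤ) - l + 2 ≤ (p : ℤ) → p ≤ n →
            lam p ≤ A (p+1) - 2 ∧ ((p : ℤ) ≤ (n : ℤ) - 1 → A (p+2) - 2 ≤ lam p))}

def lamLow (A : ℕ → ℤ) (n k l : ℕ) : ℕ → ℤ := fun q =>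
  if q ≤ k then A q
  else if (q : ℤ) ≤ (n : ℤ) - l + 1 then A (q+1) - 1
  else A (min (q+2) (n+1)) - 2

def lamUp (A : ℕ → ℤ) (n k l : ℕ) : ℕ → ℤ := fun q =>
  if 2 ≤ q ∧ q ≤ k then A (q-1)
  else if q ≤ k then A q
  else if (q : ℤ) ≤ (n : ℤ) - l + 1 then A q - 1
  else A (q+1) - 2

lemma lamLow_eq1 (A : ℕ → ℤ) (n k l q : ℕ) (h : q ≤ k) : lamLow A n k l q = A q := by
  unfold lamLow; rw [if_pos h]

lemma lamLow_eq2 (A : ℕ → ℤ) (n k l q : ℕ) (h1 : ¬ q ≤ k)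
    (h2 : (q : ℤ) ≤ (n : ℤ) - l + 1) : lamLow A n k l q = A (q+1) - 1 := by
  unfold lamLow; rw [if_neg h1, if_pos h2]

lemma lamLow_eq3 (A : ℕ → ℤ) (n k l q : ℕ) (h1 : ¬ q ≤ k)
    (h2 : ¬ (q : ℤ) ≤ (n : ℤ) - l + 1) (h3 : q + 2 ≤ n + 1) :
    lamLow A n k l q = A (q+2) - 2 := by
  unfold lamLow; rw [if_neg h1, if_neg h2, show min (q+2) (n+1) = q+2 by omega]

lemma lamLow_eq3n (A : ℕ → ℤ) (n k l q : ℕ) (h1 : ¬ q ≤ k)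
    (h2 : ¬ (q : ℤ) ≤ (n : ℤ) - l + 1) (h3 : n + 1 ≤ q + 2) :
    lamLow A n k l q = A (n+1) - 2 := by
  unfold lamLow; rw [if_neg h1, if_neg h2, show min (q+2) (n+1) = n+1 by omega]

lemma lamUp_eq1 (A : ℕ → ℤ) (n k l q : ℕ) (h : 2 ≤ q) (h' : q ≤ k) :
    lamUp A n k l q = A (q-1) := by
  unfold lamUp; rw [if_pos ⟨h, h'⟩]

lemma lamUp_eq1' (A : ℕ → ℤ) (n k l q : ℕ) (h : q ≤ 1) (h' : q ≤ k) :
    lamUp A n k l q = A q := by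
  unfold lamUp; rw [if_neg (by omega : ¬ (2 ≤ q ∧ q ≤ k)), if_pos h']

lemma lamUp_eq2 (A : ℕ → ℤ) (n k l q : ℕ) (h1 : ¬ q ≤ k)
    (h2 : (q : ℤ) ≤ (n : ℤ) - l + 1) : lamUp A n k l q = A q - 1 := by
  unfold lamUp; rw [if_neg (fun hc => h1 hc.2), if_neg h1, if_pos h2]

lemma lamUp_eq3 (A : ℕ → ℤ) (n k l q : ℕ) (h1 : ¬ q ≤ k)
    (h2 : ¬ (q : ℤ) ≤ (n : ℤ) - l + 1) : lamUp A n k l q = A (q+1) - 2 := by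
  unfold lamUp; rw [if_neg (fun hc => h1 hc.2), if_neg h1, if_neg h2]

theorem core_iff (n i j k l : ℕ) (A : ℕ → ℤ) (γ : ℕ → ℤ)
    (hC : ∀ p q : ℕ, 1 ≤ p → p ≤ q → q ≤ n+1 → A q ≤ A p)
    (hn : 2 ≤ n) (hi1 : 1 ≤ i) (hi2 : i + 1 ≤ n) (hj1 : 2 ≤ j) (hj2 : i + j ≤ n+1)
    (hk : k ≤ n) (hl1 : 1 ≤ l) (hl2 : k + l ≤ n+1)
    (hs1 : ∀ p : ℕ, 1 ≤ p → p < i → γ p ≤ A p ∧ A (p+1) ≤ γ p)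
    (hs2 : ∀ p : ℕ, i ≤ p → (p:ℤ) ≤ (n:ℤ) - j → γ p ≤ A (p+1) - 1 ∧ A (p+2) - 1 ≤ γ p)
    (hs3 : ∀ p : ℕ, (n:ℤ) - j + 1 ≤ (p:ℤ) → (p:ℤ) ≤ (n:ℤ) - 2 →
        γ p ≤ A (p+2) - 2 ∧ A (p+3) - 2 ≤ γ p) :
    ((∀ lam ∈ BoxInt n A k l, ∃ μ : ℕ → ℤ,
        (∀ p : ℕ, 1 ≤ p → p ≤ n-1 → μ p ≤ lam p ∧ lam (p+1) ≤ μ p) ∧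
        (∀ p : ℕ, 1 ≤ p → p ≤ n-2 → γ p ≤ μ p ∧ μ (p+1) ≤ γ p))
      ↔ (|(k : ℤ) - i| ≤ 1 ∧ |(l : ℤ) - j| ≤ 1)) := by
  have memLow : lamLow A n k l ∈ BoxInt n A k l := by
    refine ⟨?_, ?_, ?_⟩
    · intro p hp1 hp2
      have hv : lamLow A n k l p = A p := lamLow_eq1 A n k l p hp2
      rw [hv]
      exact ⟨fun h2 => hC (p-1) p (by omega) (by omega) (by omega), le_refl _⟩
    · intro p hp1 hp2
      have hv : lamLow A n k l p = A (p+1) - 1 := lamLow_eq2 A n k l p (by omega) hp2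
      rw [hv]
      exact ⟨by have := hC p (p+1) (by omega) (by omega) (by omega); omega, le_refl _⟩
    · intro p hp1 hp2
      rcases Nat.lt_or_ge p n with h | h
      · have hv : lamLow A n k l p = A (p+2) - 2 :=
          lamLow_eq3 A n k l p (by omega) (by omega) (by omega)
        rw [hv]
        have := hC (p+1) (p+2) (by omega) (by omega) (by omega)
        exact ⟨by omega, fun _ => le_refl _⟩
      · have hv : lamLow A n k l p = A (n+1) - 2 :=
          lamLow_eq3n A n k l p (by omega) (by omega) (by omega)
        rw [hv]
        exact ⟨by rw [show p + 1 = n + 1 by omega], fun hp3 => absurd hp3 (by omega)⟩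
  have memUp : lamUp A n k l ∈ BoxInt n A k l := by
    refine ⟨?_, ?_, ?_⟩
    · intro p hp1 hp2
      rcases Nat.lt_or_ge p 2 with h2 | h2
      · have hv : lamUp A n k l p = A p := lamUp_eq1' A n k l p (by omega) hp2
        rw [hv]
        exact ⟨fun h => absurd h (by omega), le_refl _⟩
      · have hv : lamUp A n k l p = A (p-1) := lamUp_eq1 A n k l p h2 hp2
        rw [hv]
        exact ⟨fun _ => le_refl _, hC (p-1) p (by omega) (by omega) (by omega)⟩
    · intro p hp1 hp2
      have hv : lamUp A n k l p = A p - 1 := lamUp_eq2 A n k l p (by omega) hp2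
      rw [hv]
      exact ⟨le_refl _, by have := hC p (p+1) (by omega) (by omega) (by omega); omega⟩
    · intro p hp1 hp2
      have hv : lamUp A n k l p = A (p+1) - 2 := lamUp_eq3 A n k l p (by omega) (by omega)
      rw [hv]
      exact ⟨le_refl _, fun hp3 => by
        have := hC (p+1) (p+2) (by omega) (by omega) (by omega); omega⟩
  constructor
  · -- forward direction
    intro h1
    have key : ∀ lam ∈ BoxInt n A k l, ∀ p : ℕ, 1 ≤ p → (p:ℤ) ≤ (n:ℤ) - 2 →
        γ p ≤ lam p ∧ lam (p+2) ≤ γ p := by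
      intro lam hlam p hp1 hp2
      obtain ⟨μ, hμ1, hμ2⟩ := h1 lam hlam
      have a1 := hμ1 p hp1 (by omega)
      have a2 : μ (p+1) ≤ lam (p+1) ∧ lam (p+2) ≤ μ (p+1) := hμ1 (p+1) (by omega) (by omega)
      have a3 := hμ2 p hp1 (by omega)
      exact ⟨le_trans a3.1 a1.1, le_trans a2.2 a3.2⟩
    rw [abs_le, abs_le]
    refine ⟨⟨?_, ?_⟩, ?_, ?_⟩
    · -- -1 ≤ k - i, by contradiction k + 2 ≤ i
      by_contra hcon
      have hcon' : k + 2 ≤ i := by omega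
      have h := (key _ memLow (k+1) (by omega) (by omega)).1
      have hg : A (k+2) ≤ γ (k+1) := (hs1 (k+1) (by omega) (by omega)).2
      rcases le_or_gt ((k:ℤ)+1) ((n:ℤ) - l + 1) with hb | hb
      · have hv : lamLow A n k l (k+1) = A (k+2) - 1 :=
          lamLow_eq2 A n k l (k+1) (by omega) (by omega)
        rw [hv] at h; omega
      · have hv : lamLow A n k l (k+1) = A (k+3) - 2 :=
          lamLow_eq3 A n k l (k+1) (by omega) (by omega) (by omega)
        rw [hv] at h
        have := hC (k+2) (k+3) (by omega) (by omega) (by omega); omega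
    · -- k - i ≤ 1, by contradiction i + 2 ≤ k
      by_contra hcon
      have hcon' : i + 2 ≤ k := by omega
      have h := (key _ memUp i (by omega) (by omega)).2
      have hv : lamUp A n k l (i+2) = A (i+1) := lamUp_eq1 A n k l (i+2) (by omega) (by omega)
      rw [hv] at h
      rcases le_or_gt ((i:ℤ)) ((n:ℤ) - j) with hb | hb
      · have hg : γ i ≤ A (i+1) - 1 := (hs2 i le_rfl hb).1
        omega
      · have hg : γ i ≤ A (i+2) - 2 := (hs3 i (by omega) (by omega)).1
        have := hC (i+1) (i+2) (by omega) (by omega) (by omega); omega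
    · -- -1 ≤ l - j, by contradiction l + 2 ≤ j
      by_contra hcon
      have hcon' : l + 2 ≤ j := by omega
      set p : ℕ := n - j + 1 with hp
      have hp1 : 1 ≤ p := by omega
      have hp2 : (p:ℤ) ≤ (n:ℤ) - 2 := by omega
      have h := (key _ memUp p hp1 hp2).2
      have hg : γ p ≤ A (p+2) - 2 := (hs3 p (by omega) hp2).1
      rcases le_or_gt (p+2) k with hb | hb
      · have hv : lamUp A n k l (p+2) = A (p+1) := lamUp_eq1 A n k l (p+2) (by omega) hb
        rw [hv] at h
        have := hC (p+1) (p+2) (by omega) (by omega) (by omega); omega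
      · have hv : lamUp A n k l (p+2) = A (p+2) - 1 :=
          lamUp_eq2 A n k l (p+2) (by omega) (by omega)
        rw [hv] at h; omega
    · -- l - j ≤ 1, by contradiction j + 2 ≤ l
      by_contra hcon
      have hcon' : j + 2 ≤ l := by omega
      set p : ℕ := n - j with hp
      have hp1 : 1 ≤ p := by omega
      have hp2 : (p:ℤ) ≤ (n:ℤ) - 2 := by omega
      have h := (key _ memLow p hp1 hp2).1
      have hv : lamLow A n k l p = A (p+2) - 2 :=
        lamLow_eq3 A n k l p (by omega) (by omega) (by omega)
      rw [hv] at h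
      rcases Nat.lt_or_ge p i with hb | hb
      · have hg : A (p+1) ≤ γ p := (hs1 p hp1 hb).2
        have := hC (p+1) (p+2) (by omega) (by omega) (by omega); omega
      · have hg : A (p+2) - 1 ≤ γ p := (hs2 p hb (by omega)).2
        omega
  · -- backward direction
    rintro ⟨hki, hlj⟩
    rw [abs_le] at hki hlj
    intro lam hlam
    obtain ⟨hb1, hb2, hb3⟩ := hlam
    -- (b) : γ p ≤ lam p
    have fb : ∀ p : ℕ, 1 ≤ p → (p:ℤ) ≤ (n:ℤ) - 2 → γ p ≤ lam p := by
      intro p hp1 hp2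
      rcases Nat.lt_or_ge p i with hr1 | hr1
      · have hg := (hs1 p hp1 hr1).1
        have hl := (hb1 p hp1 (by omega)).2
        omega
      rcases le_or_gt (p:ℤ) ((n:ℤ) - j) with hr2 | hr2
      · have hg := (hs2 p hr1 hr2).1
        rcases le_or_gt p k with hc | hc
        · have hl := (hb1 p hp1 hc).2
          have := hC p (p+1) (by omega) (by omega) (by omega); omega
        · have hl := (hb2 p (by omega) (by omega)).2
          omega
      · have hg := (hs3 p (by omega) hp2).1
        rcases le_or_gt p k with hc | hc
        · have hl := (hb1 p hp1 hc).2
          have c1 := hC p (p+1) (by omega) (by omega) (by omega)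
          have c2 := hC (p+1) (p+2) (by omega) (by omega) (by omega); omega
        rcases le_or_gt (p:ℤ) ((n:ℤ) - l + 1) with hc2 | hc2
        · have hl := (hb2 p (by omega) hc2).2
          have := hC (p+1) (p+2) (by omega) (by omega) (by omega); omega
        · have hl := (hb3 p (by omega) (by omega)).2 (by omega)
          omega
    -- (c) : lam (p+2) ≤ γ p
    have fc : ∀ p : ℕ, 1 ≤ p → (p:ℤ) ≤ (n:ℤ) - 2 → lam (p+2) ≤ γ p := by
      intro p hp1 hp2
      rcases Nat.lt_or_ge p i with hr1 | hr1
      · have hg := (hs1 p hp1 hr1).2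
        rcases le_or_gt (p+2) k with hc | hc
        · have hu : lam (p+2) ≤ A (p+1) := (hb1 (p+2) (by omega) hc).1 (by omega)
          omega
        rcases le_or_gt ((p:ℤ)+2) ((n:ℤ) - l + 1) with hc2 | hc2
        · have hu : lam (p+2) ≤ A (p+2) - 1 := (hb2 (p+2) (by omega) (by omega)).1
          have := hC (p+1) (p+2) (by omega) (by omega) (by omega); omega
        · have hu : lam (p+2) ≤ A (p+3) - 2 := (hb3 (p+2) (by omega) (by omega)).1
          have c1 := hC (p+1) (p+2) (by omega) (by omega) (by omega)
          have c2 := hC (p+2) (p+3) (by omega) (by omega) (by omega); omega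
      rcases le_or_gt (p:ℤ) ((n:ℤ) - j) with hr2 | hr2
      · have hg := (hs2 p hr1 hr2).2
        rcases le_or_gt ((p:ℤ)+2) ((n:ℤ) - l + 1) with hc2 | hc2
        · have hu : lam (p+2) ≤ A (p+2) - 1 := (hb2 (p+2) (by omega) (by omega)).1
          omega
        · have hu : lam (p+2) ≤ A (p+3) - 2 := (hb3 (p+2) (by omega) (by omega)).1
          have := hC (p+2) (p+3) (by omega) (by omega) (by omega); omega
      · have hg := (hs3 p (by omega) hp2).2
        have hu : lam (p+2) ≤ A (p+3) - 2 := (hb3 (p+2) (by omega) (by omega)).1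
        omega
    -- (a) : lam (p+1) ≤ lam p
    have fa : ∀ p : ℕ, 1 ≤ p → (p:ℤ) ≤ (n:ℤ) - 1 → lam (p+1) ≤ lam p := by
      intro p hp1 hp2
      rcases le_or_gt p k with hc | hc
      · have hl := (hb1 p hp1 hc).2
        rcases le_or_gt (p+1) k with hd | hd
        · have hu : lam (p+1) ≤ A p := (hb1 (p+1) (by omega) hd).1 (by omega)
          omega
        rcases le_or_gt ((p:ℤ)+1) ((n:ℤ) - l + 1) with hd2 | hd2
        · have hu : lam (p+1) ≤ A (p+1) - 1 := (hb2 (p+1) (by omega) (by omega)).1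
          have := hC p (p+1) (by omega) (by omega) (by omega); omega
        · have hu : lam (p+1) ≤ A (p+2) - 2 := (hb3 (p+1) (by omega) (by omega)).1
          have c1 := hC p (p+1) (by omega) (by omega) (by omega)
          have c2 := hC (p+1) (p+2) (by omega) (by omega) (by omega); omega
      rcases le_or_gt (p:ℤ) ((n:ℤ) - l + 1) with hc2 | hc2
      · have hl := (hb2 p (by omega) hc2).2
        rcases le_or_gt ((p:ℤ)+1) ((n:ℤ) - l + 1) with hd2 | hd2
        · have hu : lam (p+1) ≤ A (p+1) - 1 := (hb2 (p+1) (by omega) (by omega)).1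
          omega
        · have hu : lam (p+1) ≤ A (p+2) - 2 := (hb3 (p+1) (by omega) (by omega)).1
          have := hC (p+1) (p+2) (by omega) (by omega) (by omega); omega
      · have hl := (hb3 p (by omega) (by omega)).2 (by omega)
        have hu : lam (p+1) ≤ A (p+2) - 2 := (hb3 (p+1) (by omega) (by omega)).1
        omega
    -- (d) : γ (p+1) ≤ γ p
    have fd : ∀ p : ℕ, 1 ≤ p → (p:ℤ) ≤ (n:ℤ) - 3 → γ (p+1) ≤ γ p := by
      intro p hp1 hp2
      rcases Nat.lt_or_ge (p+1) i with hr | hr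
      · have h1 : γ (p+1) ≤ A (p+1) := (hs1 (p+1) (by omega) hr).1
        have h2 := (hs1 p hp1 (by omega)).2
        omega
      rcases Nat.lt_or_ge p i with hq | hq
      · have h2 : A (p+1) ≤ γ p := (hs1 p hp1 hq).2
        rcases le_or_gt ((p:ℤ)+1) ((n:ℤ) - j) with hr2 | hr2
        · have h1 : γ (p+1) ≤ A (p+2) - 1 := (hs2 (p+1) hr (by omega)).1
          have := hC (p+1) (p+2) (by omega) (by omega) (by omega); omega
        · have h1 : γ (p+1) ≤ A (p+3) - 2 := (hs3 (p+1) (by omega) (by omega)).1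
          have c1 := hC (p+1) (p+2) (by omega) (by omega) (by omega)
          have c2 := hC (p+2) (p+3) (by omega) (by omega) (by omega); omega
      rcases le_or_gt ((p:ℤ)+1) ((n:ℤ) - j) with hr2 | hr2
      · have h1 : γ (p+1) ≤ A (p+2) - 1 := (hs2 (p+1) (by omega) (by omega)).1
        have h2 := (hs2 p hq (by omega)).2
        omega
      rcases le_or_gt (p:ℤ) ((n:ℤ) - j) with hr3 | hr3
      · have h1 : γ (p+1) ≤ A (p+3) - 2 := (hs3 (p+1) (by omega) (by omega)).1
        have h2 := (hs2 p hq hr3).2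
        have := hC (p+2) (p+3) (by omega) (by omega) (by omega); omega
      · have h1 : γ (p+1) ≤ A (p+3) - 2 := (hs3 (p+1) (by omega) (by omega)).1
        have h2 := (hs3 p (by omega) (by omega)).2
        omega
    refine ⟨fun q => if (q:ℤ) ≤ (n:ℤ) - 2 then max (lam (q+1)) (γ q) else lam (q+1), ?_, ?_⟩
    · intro p hp1 hp2
      by_cases hq : (p:ℤ) ≤ (n:ℤ) - 2
      · simp only [if_pos hq]
        refine ⟨max_le (fa p hp1 (by omega)) (fb p hp1 hq), le_max_left _ _⟩
      · simp only [if_neg hq]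
        exact ⟨fa p hp1 (by omega), le_refl _⟩
    · intro p hp1 hp2
      constructor
      · simp only [if_pos (show (p:ℤ) ≤ (n:ℤ) - 2 by omega)]
        exact le_max_right _ _
      · by_cases hq : ((p:ℤ)+1) ≤ (n:ℤ) - 2
        · simp only [if_pos (show ((p+1:ℕ):ℤ) ≤ (n:ℤ) - 2 by omega)]
          exact max_le (fc p hp1 (by omega)) (fd p hp1 (by omega))
        · simp only [if_neg (show ¬ ((p+1:ℕ):ℤ) ≤ (n:ℤ) - 2 by omega)]
          exact fc p hp1 (by omega)

/-- Let `n ≥ 2`, let `Λ_1 > ⋯ > Λ_{n+1}` be a regular integral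
infinitesimal character, let `γ ∈ S_{i,j}` with `1 ≤ i ≤ n−1`, `2 ≤ j ≤ n+1−i`, and
let `0 ≤ k ≤ n`, `1 ≤ l ≤ n+1−k`.  Then the following are equivalent:
(1) for every `λ ∈ Box_{k,l}` there exists `μ ∈ ℤ^{n−1}` with
`λ_p ≥ μ_p ≥ λ_{p+1}` for `1 ≤ p ≤ n−1` and `μ_p ≥ γ_p ≥ μ_{p+1}` for `1 ≤ p ≤ n−2`;
(2) `|k−i| ≤ 1` and `|l−j| ≤ 1`. -/
theorem Box_contains_gamma_iff (n : ℕ) (hn : 2 ≤ n) (Λ : ℕ → ℝ)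
    (hdec : ∀ p : ℕ, 1 ≤ p → p ≤ n → Λ (p+1) < Λ p)
    (hint : ∀ p : ℕ, 1 ≤ p → p ≤ n+1 → ∃ m : ℤ, Λ p = m + n/2)
    (i j : ℕ) (hi1 : 1 ≤ i) (hi2 : i ≤ n-1) (hj1 : 2 ≤ j) (hj2 : i + j ≤ n+1)
    (γ : ℕ → ℤ) (hγ : γ ∈ Sset n Λ i j)
    (k l : ℕ) (hk : k ≤ n) (hl1 : 1 ≤ l) (hl2 : k + l ≤ n+1) :
    ((∀ lam ∈ Box n Λ k l, ∃ μ : ℕ → ℤ,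
        (∀ p : ℕ, 1 ≤ p → p ≤ n-1 → μ p ≤ lam p ∧ lam (p+1) ≤ μ p) ∧
        (∀ p : ℕ, 1 ≤ p → p ≤ n-2 → γ p ≤ μ p ∧ μ (p+1) ≤ γ p))
      ↔ (|(k : ℤ) - i| ≤ 1 ∧ |(l : ℤ) - j| ≤ 1)) := by

  obtain ⟨A, hA⟩ : ∃ A : ℕ → ℤ, ∀ p : ℕ, 1 ≤ p → p ≤ n+1 →
      Λ p - (n:ℝ)/2 = (A p : ℝ) - (p:ℝ) := by
    refine ⟨fun p => ⌊Λ p - (n:ℝ)/2 + (p:ℝ)⌋, fun p h1 h2 => ?_⟩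
    obtain ⟨m, hm⟩ := hint p h1 h2
    show Λ p - (n:ℝ)/2 = (⌊Λ p - (n:ℝ)/2 + (p:ℝ)⌋ : ℝ) - (p:ℝ)
    rw [hm, show (m:ℝ) + (n:ℝ)/2 - (n:ℝ)/2 + (p:ℝ) = ((m + p : ℤ):ℝ) by push_cast; ring,
      Int.floor_intCast]
    push_cast; ring
  have hC : ∀ p q : ℕ, 1 ≤ p → p ≤ q → q ≤ n+1 → A q ≤ A p := by
    have step : ∀ p : ℕ, 1 ≤ p → p ≤ n → A (p+1) ≤ A p := by
      intro p h1 h2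
      have h3 := hdec p h1 h2
      have e1 := hA p h1 (by omega)
      have e2 := hA (p+1) (by omega) (by omega)
      have hlt : (A (p+1) : ℝ) < (A p : ℝ) + 1 := by
        push_cast at e1 e2 ⊢; linarith
      have : A (p+1) < A p + 1 := by exact_mod_cast hlt
      omega
    intro p q h1 h2 h3
    obtain ⟨d, rfl⟩ : ∃ d, q = p + d := ⟨q - p, by omega⟩
    clear h2
    induction d with
    | zero => exact le_refl _
    | succ d ih =>
      have h4 : A (p + d + 1) ≤ A (p + d) := step (p+d) (by omega) (by omega)
      exact le_trans h4 (ih (by omega))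
  obtain ⟨hg1, hg2, hg3⟩ := hγ
  have hs1 : ∀ p : ℕ, 1 ≤ p → p < i → γ p ≤ A p ∧ A (p+1) ≤ γ p := by
    intro p h1 h2
    obtain ⟨u, v⟩ := hg1 p h1 h2
    rw [hA p h1 (by omega)] at u
    rw [hA (p+1) (by omega) (by omega)] at v
    push_cast at u v
    constructor
    · exact_mod_cast (by linarith : (γ p : ℝ) ≤ (A p : ℝ))
    · exact_mod_cast (by linarith : (A (p+1) : ℝ) ≤ (γ p : ℝ))
  have hs2 : ∀ p : ℕ, i ≤ p → (p:ℤ) ≤ (n:ℤ) - j → γ p ≤ A (p+1) - 1 ∧ A (p+2) - 1 ≤ γ p := by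
    intro p h1 h2
    obtain ⟨u, v⟩ := hg2 p h1 h2
    rw [hA (p+1) (by omega) (by omega)] at u
    rw [hA (p+2) (by omega) (by omega)] at v
    push_cast at u v
    constructor
    · exact_mod_cast (by linarith : (γ p : ℝ) ≤ (A (p+1) : ℝ) - 1)
    · exact_mod_cast (by linarith : (A (p+2) : ℝ) - 1 ≤ (γ p : ℝ))
  have hs3 : ∀ p : ℕ, (n:ℤ) - j + 1 ≤ (p:ℤ) → (p:ℤ) ≤ (n:ℤ) - 2 →
      γ p ≤ A (p+2) - 2 ∧ A (p+3) - 2 ≤ γ p := by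
    intro p h1 h2
    obtain ⟨u, v⟩ := hg3 p h1 h2
    rw [hA (p+2) (by omega) (by omega)] at u
    rw [hA (p+3) (by omega) (by omega)] at v
    push_cast at u v
    constructor
    · exact_mod_cast (by linarith : (γ p : ℝ) ≤ (A (p+2) : ℝ) - 2)
    · exact_mod_cast (by linarith : (A (p+3) : ℝ) - 2 ≤ (γ p : ℝ))
  have hBox : ∀ lam : ℕ → ℤ, lam ∈ Box n Λ k l ↔ lam ∈ BoxInt n A k l := by
    intro lam
    constructor
    · rintro ⟨h1, h2, h3⟩
      refine ⟨fun p hp1 hp2 => ⟨fun hp3 => ?_, ?_⟩,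
        fun p hp1 hp2 => ⟨?_, ?_⟩, fun p hp1 hp2 => ⟨?_, fun hp3 => ?_⟩⟩
      · have u := (h1 p hp1 hp2).1 hp3
        rw [hA (p-1) (by omega) (by omega)] at u
        rw [show ((p-1:ℕ):ℝ) = (p:ℝ) - 1 by push_cast [Nat.cast_sub (by omega : 1 ≤ p)]; ring] at u
        exact_mod_cast (by linarith : (lam p : ℝ) ≤ (A (p-1) : ℝ))
      · have v := (h1 p hp1 hp2).2
        rw [hA p (by omega) (by omega)] at v
        exact_mod_cast (by linarith : (A p : ℝ) ≤ (lam p : ℝ))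
      · have u := (h2 p hp1 hp2).1
        rw [hA p (by omega) (by omega)] at u
        exact_mod_cast (by linarith : (lam p : ℝ) ≤ (A p : ℝ) - 1)
      · have v := (h2 p hp1 hp2).2
        rw [hA (p+1) (by omega) (by omega)] at v
        push_cast at v
        exact_mod_cast (by linarith : (A (p+1) : ℝ) - 1 ≤ (lam p : ℝ))
      · have u := (h3 p hp1 hp2).1
        rw [hA (p+1) (by omega) (by omega)] at u
        push_cast at u
        exact_mod_cast (by linarith : (lam p : ℝ) ≤ (A (p+1) : ℝ) - 2)
      · have v := (h3 p hp1 hp2).2 hp3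
        rw [hA (p+2) (by omega) (by omega)] at v
        push_cast at v
        exact_mod_cast (by linarith : (A (p+2) : ℝ) - 2 ≤ (lam p : ℝ))
    · rintro ⟨h1, h2, h3⟩
      refine ⟨fun p hp1 hp2 => ⟨fun hp3 => ?_, ?_⟩,
        fun p hp1 hp2 => ⟨?_, ?_⟩, fun p hp1 hp2 => ⟨?_, fun hp3 => ?_⟩⟩
      · have u : (lam p : ℝ) ≤ (A (p-1) : ℝ) := by exact_mod_cast (h1 p hp1 hp2).1 hp3
        rw [hA (p-1) (by omega) (by omega),
          show ((p-1:ℕ):ℝ) = (p:ℝ) - 1 by push_cast [Nat.cast_sub (by omega : 1 ≤ p)]; ring]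
        linarith
      · have v : (A p : ℝ) ≤ (lam p : ℝ) := by exact_mod_cast (h1 p hp1 hp2).2
        rw [hA p (by omega) (by omega)]
        linarith
      · have u : (lam p : ℝ) ≤ (A p : ℝ) - 1 := by exact_mod_cast (h2 p hp1 hp2).1
        rw [hA p (by omega) (by omega)]
        linarith
      · have v : (A (p+1) : ℝ) - 1 ≤ (lam p : ℝ) := by exact_mod_cast (h2 p hp1 hp2).2
        rw [hA (p+1) (by omega) (by omega)]
        push_cast
        linarith
      · have u : (lam p : ℝ) ≤ (A (p+1) : ℝ) - 2 := by exact_mod_cast (h3 p hp1 hp2).1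
        rw [hA (p+1) (by omega) (by omega)]
        push_cast
        linarith
      · have v : (A (p+2) : ℝ) - 2 ≤ (lam p : ℝ) := by exact_mod_cast (h3 p hp1 hp2).2 hp3
        rw [hA (p+2) (by omega) (by omega)]
        push_cast
        linarith
  simp only [hBox]
  exact core_iff n i j k l A γ hC hn hi1 (by omega) hj1 hj2 hk hl1 hl2 hs1 hs2 hs3
end
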